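/- arXiv:2101.09471 — 3 statements merged into one kernel-verified Lean document; each statement's English description precedes it below -/
import Mathlib

section
/- There exists a closed set E ⊆ ℝ which is strongly one-sided dense but does not have uniform density type (UDT). -/
open MeasureTheory Set Filter Topology

/-- `E^{γ,δ}`: points `x` such that for every `r ∈ (0, δ]`, the one-sided density of `E`
on one of `(x-r,x)`, `(x,x+r)` is at least `γ`. -/
noncomputable def densSet (E : Set ℝ) (γ δ : ℝ) : Set ℝ :=
  {x : ℝ | ∀ r ∈ Set.Ioc (0 : ℝ) δ,
    max ((volume (Set.Ioo (x - r) x ∩ E)).toReal / r)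
        ((volume (Set.Ioo x (x + r) ∩ E)).toReal / r) ≥ γ}

/-- `E` has uniform density type. -/
def UDT (E : Set ℝ) : Prop :=
  ∃ γ δ : ℕ → ℝ, StrictMono γ ∧ Tendsto γ atTop (𝓝 1) ∧
    StrictAnti δ ∧ Tendsto δ atTop (𝓝 0) ∧
    E ⊆ ⋂ k : ℕ, ⋃ n, ⋃ (_ : n ≥ k), densSet E (γ n) (δ n)

/-- `E` is strongly one-sided dense at `x`. -/
def StronglyOneSidedDenseAt (E : Set ℝ) (x : ℝ) : Prop :=
  ∀ r : ℕ → ℝ, (∀ n, 0 < r n) → Tendsto r atTop (𝓝 0) →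
    Tendsto (fun n => max ((volume (E ∩ Set.Icc (x - r n) x)).toReal / r n)
        ((volume (E ∩ Set.Icc x (x + r n))).toReal / r n)) atTop (𝓝 1)

/-- `E` is strongly one-sided dense. -/
def StronglyOneSidedDense (E : Set ℝ) : Prop :=
  ∀ x ∈ E, StronglyOneSidedDenseAt E x

namespace SOSDX

structure St where
  c : ℝ
  s : ℝ
  w : ℝ

noncomputable def child (d : St) (n : ℕ) : St :=
  ⟨d.c + d.s * (1/4:ℝ)^n / 16, d.s * d.w * (1/4:ℝ)^n / 512, d.w / 2⟩

noncomputable def go (d : St) : List ℕ → St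
  | [] => d
  | n :: l => go (child d n) l

noncomputable def root : St := ⟨1/2, 1/2, 1/8⟩
noncomputable def st (σ : List ℕ) : St := go root σ

def Ok (d : St) : Prop := 0 < d.s ∧ 0 < d.w ∧ d.w ≤ 1/8

def cellI (d : St) : Set ℝ := Icc (d.c - d.s) (d.c + d.s)
def Lgap (d : St) : Set ℝ := Ioo (d.c - 3*d.s/4) (d.c - 3*d.s/4 + 2*d.w*d.s)
def Rgap (d : St) : Set ℝ := Ioo (d.c + 3*d.s/4 - 2*d.w*d.s) (d.c + 3*d.s/4)

noncomputable def E : Set ℝ := Icc 0 1 \ ⋃ σ : List ℕ, (Lgap (st σ) ∪ Rgap (st σ))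

lemma ok_child (d : St) (hd : Ok d) (n : ℕ) : Ok (child d n) := by
  obtain ⟨h1, h2, h3⟩ := hd
  have hq : (0:ℝ) < (1/4:ℝ)^n := by positivity
  simp only [child, Ok]
  refine ⟨by positivity, by positivity, by linarith⟩

lemma ok_go (d : St) (hd : Ok d) (l : List ℕ) : Ok (go d l) := by
  induction l generalizing d with
  | nil => exact hd
  | cons n l ih => exact ih _ (ok_child d hd n)

lemma ok_root : Ok root := by refine ⟨by norm_num [root], by norm_num [root], by norm_num [root]⟩

lemma ok_st (σ : List ℕ) : Ok (st σ) := ok_go _ ok_root _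

lemma q_pos (n : ℕ) : (0:ℝ) < (1/4:ℝ)^n := by positivity
lemma q_le_one (n : ℕ) : ((1/4:ℝ))^n ≤ 1 := by
  apply pow_le_one₀ <;> norm_num

/-- children live strictly inside `(c, c + s/8)`. -/
lemma child_cell_subset (d : St) (hd : Ok d) (n : ℕ) :
    cellI (child d n) ⊆ Ioo d.c (d.c + d.s/8) := by
  obtain ⟨h1, h2, h3⟩ := hd
  have hq := q_pos n
  have hq1 := q_le_one n
  intro y hy
  simp only [cellI, child, mem_Icc] at hy
  constructor
  · nlinarith [hy.1]
  · nlinarith [hy.2]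

lemma Ioo_subset_cellI (d : St) (hd : Ok d) : Ioo d.c (d.c + d.s/8) ⊆ cellI d := by
  obtain ⟨h1, _, _⟩ := hd
  intro y hy
  simp only [mem_Ioo] at hy
  simp only [cellI, mem_Icc]
  constructor <;> nlinarith [hy.1, hy.2]

lemma go_cell_subset (d : St) (hd : Ok d) (l : List ℕ) : cellI (go d l) ⊆ cellI d := by
  induction l generalizing d with
  | nil => exact subset_rfl
  | cons n l ih =>
      exact (ih _ (ok_child d hd n)).trans
        ((child_cell_subset d hd n).trans (Ioo_subset_cellI d hd))

lemma go_cell_subset_core (d : St) (hd : Ok d) (n : ℕ) (l : List ℕ) :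
    cellI (go d (n :: l)) ⊆ Ioo d.c (d.c + d.s/8) :=
  (go_cell_subset _ (ok_child d hd n) l).trans (child_cell_subset d hd n)

/-- siblings are disjoint. -/
lemma sibling_disjoint (d : St) (hd : Ok d) {n m : ℕ} (h : n ≠ m) :
    cellI (child d n) ∩ cellI (child d m) = ∅ := by
  obtain ⟨h1, h2, h3⟩ := hd
  -- wlog n < m; then sup (child m) < inf (child n)
  have key : ∀ a b : ℕ, a < b → ∀ y, y ∈ cellI (child d a) → y ∈ cellI (child d b) → False := by
    intro a b hab y hya hyb
    have hqa := q_pos a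
    have hqb := q_pos b
    have hle : ((1/4:ℝ))^b ≤ (1/4:ℝ)^(a+1) :=
      pow_le_pow_of_le_one (by norm_num) (by norm_num) hab
    have hpa : ((1/4:ℝ))^(a+1) = (1/4:ℝ)^a * (1/4) := pow_succ _ _
    simp only [cellI, child, mem_Icc] at hya hyb
    have h1a := hya.1
    have h2b := hyb.2
    have hq1a := q_le_one a
    nlinarith [mul_pos h1 hqa, mul_pos h1 hqb]
  ext y
  simp only [mem_inter_iff, mem_empty_iff_false, iff_false, not_and]
  intro hyn hym
  rcases lt_or_gt_of_ne h with hlt | hgt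
  · exact key n m hlt y hyn hym
  · exact key m n hgt y hym hyn

/-- gaps are inside the cell. -/
lemma gaps_subset_cell (d : St) (hd : Ok d) : Lgap d ∪ Rgap d ⊆ cellI d := by
  obtain ⟨h1, h2, h3⟩ := hd
  intro y hy
  simp only [Lgap, Rgap, mem_union, mem_Ioo] at hy
  simp only [cellI, mem_Icc]
  rcases hy with ⟨ha, hb⟩ | ⟨ha, hb⟩ <;> constructor <;> nlinarith

/-- gaps avoid the children region `(c, c+s/8)` — in fact `Ioo (c-s/2) (c+s/2)`. -/
lemma gaps_avoid_mid (d : St) (hd : Ok d) {y : ℝ}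
    (hy1 : d.c - d.s/2 ≤ y) (hy2 : y ≤ d.c + d.s/2) :
    y ∉ Lgap d ∪ Rgap d := by
  obtain ⟨h1, h2, h3⟩ := hd
  intro hy
  simp only [Lgap, Rgap, mem_union, mem_Ioo] at hy
  rcases hy with ⟨ha, hb⟩ | ⟨ha, hb⟩ <;> nlinarith



lemma go_append (d : St) (l1 l2 : List ℕ) : go d (l1 ++ l2) = go (go d l1) l2 := by
  induction l1 generalizing d with
  | nil => rfl
  | cons n l ih => simp only [List.cons_append, go]; exact ih _

lemma st_append (l1 l2 : List ℕ) : st (l1 ++ l2) = go (st l1) l2 := go_append _ _ _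

lemma cellI_st_subset_unit (σ : List ℕ) : cellI (st σ) ⊆ Icc 0 1 := by
  have : cellI (st σ) ⊆ cellI root := go_cell_subset root ok_root σ
  refine this.trans ?_
  intro y hy
  simp only [cellI, root, mem_Icc] at hy ⊢
  constructor <;> [linarith [hy.1]; linarith [hy.2]]

/-- Key avoidance: if `y` is in the cell of `σ` (relative to `d`), outside its gaps,
and outside all of its children, then `y` avoids the gaps of every `τ`-cell. -/
lemma key_avoid (σ : List ℕ) : ∀ (τ : List ℕ) (d : St), Ok d → ∀ y : ℝ,
    y ∈ cellI (go d σ) → y ∉ Lgap (go d σ) ∪ Rgap (go d σ) →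
    (∀ n, y ∉ cellI (go d (σ ++ [n]))) →
    y ∉ Lgap (go d τ) ∪ Rgap (go d τ) := by
  induction σ with
  | nil =>
      intro τ d hd y hy hgap hch
      cases τ with
      | nil => exact hgap
      | cons m τ' =>
          intro hcon
          have h1 : Lgap (go d (m :: τ')) ∪ Rgap (go d (m :: τ')) ⊆ cellI (go d (m :: τ')) :=
            gaps_subset_cell _ (ok_go _ hd _)
          have h2 : cellI (go d (m :: τ')) ⊆ cellI (child d m) := by
            show cellI (go (child d m) τ') ⊆ _
            exact go_cell_subset _ (ok_child d hd m) τ'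
          exact hch m (h2 (h1 hcon))
  | cons a σ' ih =>
      intro τ d hd y hy hgap hch
      cases τ with
      | nil =>
          have hy' : y ∈ Ioo d.c (d.c + d.s/8) := go_cell_subset_core d hd a σ' hy
          obtain ⟨h1, h2, h3⟩ := hd
          exact gaps_avoid_mid d ⟨h1,h2,h3⟩ (by simp only [mem_Ioo] at hy'; linarith [hy'.1])
            (by simp only [mem_Ioo] at hy'; linarith [hy'.2])
      | cons b τ' =>
          by_cases hab : a = b
          · subst hab
            exact ih τ' (child d a) (ok_child d hd a) y hy hgap
              (fun n => by
                have := hch n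
                simpa only [List.cons_append, go] using this)
          · intro hcon
            have h1 : Lgap (go d (b :: τ')) ∪ Rgap (go d (b :: τ')) ⊆ cellI (child d b) :=
              (gaps_subset_cell _ (ok_go _ (ok_child d hd b) _)).trans
                (go_cell_subset _ (ok_child d hd b) τ')
            have h2 : y ∈ cellI (child d a) := go_cell_subset _ (ok_child d hd a) σ' hy
            have := sibling_disjoint d hd hab
            have : y ∈ cellI (child d a) ∩ cellI (child d b) := ⟨h2, h1 hcon⟩
            rw [sibling_disjoint d hd hab] at this
            exact this

/-- Solid lemma: a point of the `σ`-cell outside its own gaps and outside all children is in `E`. -/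
lemma solid (σ : List ℕ) (y : ℝ) (hy : y ∈ cellI (st σ))
    (hgap : y ∉ Lgap (st σ) ∪ Rgap (st σ))
    (hch : ∀ n, y ∉ cellI (st (σ ++ [n]))) : y ∈ E := by
  refine ⟨cellI_st_subset_unit σ hy, ?_⟩
  intro hcon
  simp only [mem_iUnion] at hcon
  obtain ⟨τ, hτ⟩ := hcon
  exact key_avoid σ τ root ok_root y hy hgap hch hτ

/-- complement form -/
lemma cell_diff_E (σ : List ℕ) :
    cellI (st σ) \ E ⊆ (Lgap (st σ) ∪ Rgap (st σ)) ∪ ⋃ n : ℕ, cellI (st (σ ++ [n])) := by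
  intro y hy
  by_contra hcon
  simp only [mem_union, mem_iUnion, not_or, not_exists] at hcon
  exact hy.2 (solid σ y hy.1 (fun h => h.elim hcon.1.1 hcon.1.2) hcon.2)

/-- a deeper cell avoids the gaps of every strictly shorter index. -/
lemma key_avoid2 : ∀ (σ τ : List ℕ) (d : St), Ok d → τ.length < σ.length → ∀ y : ℝ,
    y ∈ cellI (go d σ) → y ∉ Lgap (go d τ) ∪ Rgap (go d τ) := by
  intro σ
  induction σ with
  | nil => intro τ d hd h; exact absurd h (by simp)
  | cons a σ' ih =>
      intro τ d hd hlen y hy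
      cases τ with
      | nil =>
          have hy' : y ∈ Ioo d.c (d.c + d.s/8) := go_cell_subset_core d hd a σ' hy
          exact gaps_avoid_mid d hd (by simp only [mem_Ioo] at hy'; linarith [hy'.1])
            (by simp only [mem_Ioo] at hy'; linarith [hy'.2])
      | cons b τ' =>
          by_cases hab : a = b
          · subst hab
            exact ih τ' (child d a) (ok_child d hd a) (by simpa using Nat.lt_of_succ_lt_succ hlen) y hy
          · intro hcon
            have h1 : Lgap (go d (b :: τ')) ∪ Rgap (go d (b :: τ')) ⊆ cellI (child d b) :=
              (gaps_subset_cell _ (ok_go _ (ok_child d hd b) _)).trans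
                (go_cell_subset _ (ok_child d hd b) τ')
            have h2 : y ∈ cellI (child d a) := go_cell_subset _ (ok_child d hd a) σ' hy
            have : y ∈ cellI (child d a) ∩ cellI (child d b) := ⟨h2, h1 hcon⟩
            rw [sibling_disjoint d hd hab] at this
            exact this

/-- branch points lie in `E`. -/
lemma branch_mem_E (x : ℝ) (hx : ∀ L : ℕ, ∃ σ : List ℕ, σ.length = L ∧ x ∈ cellI (st σ)) :
    x ∈ E := by
  obtain ⟨σ0, _, hσ0⟩ := hx 0
  refine ⟨cellI_st_subset_unit σ0 hσ0, ?_⟩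
  intro hcon
  simp only [mem_iUnion] at hcon
  obtain ⟨τ, hτ⟩ := hcon
  obtain ⟨σ, hlen, hσ⟩ := hx (τ.length + 1)
  exact key_avoid2 σ τ root ok_root (by omega) x hσ hτ

/-- same length, different index: disjoint cells. -/
lemma same_length_disjoint : ∀ (σ τ : List ℕ) (d : St), Ok d → σ.length = τ.length → σ ≠ τ →
    ∀ y : ℝ, y ∈ cellI (go d σ) → y ∈ cellI (go d τ) → False := by
  intro σ
  induction σ with
  | nil => intro τ d hd hlen hne; exact absurd (List.length_eq_zero_iff.mp hlen.symm).symm hne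
  | cons a σ' ih =>
      intro τ d hd hlen hne y hyσ hyτ
      cases τ with
      | nil => simp at hlen
      | cons b τ' =>
          by_cases hab : a = b
          · subst hab
            refine ih τ' (child d a) (ok_child d hd a) (by simpa using hlen) ?_ y hyσ hyτ
            intro h; exact hne (by rw [h])
          · have h1 : y ∈ cellI (child d a) := go_cell_subset _ (ok_child d hd a) σ' hyσ
            have h2 : y ∈ cellI (child d b) := go_cell_subset _ (ok_child d hd b) τ' hyτ
            have : y ∈ cellI (child d a) ∩ cellI (child d b) := ⟨h1, h2⟩
            rw [sibling_disjoint d hd hab] at this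
            exact this

lemma E_closed : IsClosed E := by
  have : IsOpen (⋃ σ : List ℕ, (Lgap (st σ) ∪ Rgap (st σ))) := by
    apply isOpen_iUnion
    intro σ
    exact (isOpen_Ioo).union (isOpen_Ioo)
  exact isClosed_Icc.sdiff this

lemma E_meas : MeasurableSet E := E_closed.measurableSet

/-! ### Measure helpers -/

lemma st_child (σ : List ℕ) (n : ℕ) : st (σ ++ [n]) = child (st σ) n := by
  rw [st_append]; rfl

lemma vol_cellI (d : St) (hd : Ok d) : volume (cellI d) = ENNReal.ofReal (2 * d.s) := by
  rw [cellI, Real.volume_Icc]; ring_nf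

lemma tsum_geom_bound (a : ℝ) (ha : 0 ≤ a) :
    (∑' m : ℕ, ENNReal.ofReal (a * (1/4:ℝ)^m)) = ENNReal.ofReal (a * (4/3)) := by
  have hs : Summable (fun m : ℕ => a * (1/4:ℝ)^m) :=
    (summable_geometric_of_lt_one (by norm_num) (by norm_num)).mul_left a
  rw [← ENNReal.ofReal_tsum_of_nonneg (fun m => by positivity) hs]
  congr 1
  rw [tsum_mul_left, tsum_geometric_of_lt_one (by norm_num) (by norm_num)]
  norm_num

/-- total length of children cells from index `k` on. -/
lemma vol_children_tail (σ : List ℕ) (k : ℕ) :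
    volume (⋃ m : ℕ, cellI (st (σ ++ [k + m]))) ≤
      ENNReal.ofReal ((st σ).s * (st σ).w * (1/4:ℝ)^k / 192) := by
  obtain ⟨h1, h2, h3⟩ := ok_st σ
  refine (measure_iUnion_le _).trans ?_
  have hv : ∀ m : ℕ, volume (cellI (st (σ ++ [k + m]))) =
      ENNReal.ofReal (((st σ).s * (st σ).w * (1/4:ℝ)^k / 256) * (1/4:ℝ)^m) := by
    intro m
    rw [st_child, vol_cellI _ (ok_child _ (ok_st σ) _)]
    simp only [child]
    rw [pow_add]
    ring_nf
  calc (∑' m : ℕ, volume (cellI (st (σ ++ [k + m]))))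
      = ∑' m : ℕ, ENNReal.ofReal (((st σ).s * (st σ).w * (1/4:ℝ)^k / 256) * (1/4:ℝ)^m) := by
        exact tsum_congr hv
    _ = ENNReal.ofReal (((st σ).s * (st σ).w * (1/4:ℝ)^k / 256) * (4/3)) := by
        apply tsum_geom_bound
        have := q_pos k
        positivity
    _ ≤ ENNReal.ofReal ((st σ).s * (st σ).w * (1/4:ℝ)^k / 192) := by
        apply ENNReal.ofReal_le_ofReal
        have := q_pos k
        nlinarith [mul_pos (mul_pos h1 h2) (q_pos k)]

lemma vol_gap (d : St) (hd : Ok d) :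
    volume (Lgap d) = ENNReal.ofReal (2 * d.w * d.s) ∧
    volume (Rgap d) = ENNReal.ofReal (2 * d.w * d.s) := by
  constructor
  · rw [Lgap, Real.volume_Ioo]; ring_nf
  · rw [Rgap, Real.volume_Ioo]; ring_nf

/-- deficiency of a cell. -/
lemma cell_deficiency (τ : List ℕ) :
    volume (cellI (st τ) \ E) ≤ ENNReal.ofReal (5 * (st τ).w * (st τ).s) := by
  obtain ⟨h1, h2, h3⟩ := ok_st τ
  refine (measure_mono (cell_diff_E τ)).trans ?_
  have hchild : volume (⋃ n : ℕ, cellI (st (τ ++ [n]))) ≤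
      ENNReal.ofReal ((st τ).s * (st τ).w / 192) := by
    have := vol_children_tail τ 0
    simpa using this
  calc volume ((Lgap (st τ) ∪ Rgap (st τ)) ∪ ⋃ n : ℕ, cellI (st (τ ++ [n])))
      ≤ (volume (Lgap (st τ)) + volume (Rgap (st τ))) + volume (⋃ n : ℕ, cellI (st (τ ++ [n]))) :=
        (measure_union_le _ _).trans (add_le_add (measure_union_le _ _) le_rfl)
    _ ≤ (ENNReal.ofReal (2 * (st τ).w * (st τ).s) + ENNReal.ofReal (2 * (st τ).w * (st τ).s)) +
        ENNReal.ofReal ((st τ).s * (st τ).w / 192) := by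
        refine add_le_add (add_le_add ?_ ?_) hchild
        · exact le_of_eq (vol_gap _ (ok_st τ)).1
        · exact le_of_eq (vol_gap _ (ok_st τ)).2
    _ ≤ ENNReal.ofReal (5 * (st τ).w * (st τ).s) := by
        rw [← ENNReal.ofReal_add (by positivity) (by positivity),
            ← ENNReal.ofReal_add (by positivity) (by positivity)]
        apply ENNReal.ofReal_le_ofReal
        nlinarith [mul_pos h1 h2]

lemma hmono4 {a b : ℕ} (h : a ≤ b) : ((1/4:ℝ))^b ≤ (1/4:ℝ)^a :=
  pow_le_pow_of_le_one (by norm_num) (by norm_num) h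

set_option maxHeartbeats 2000000 in
/-- The key one-sided density estimate at branch points,
at a scale `r` between the level of the child cell and the cell. -/
lemma side_est (σ : List ℕ) (N : ℕ) (x r : ℝ)
    (hx : x ∈ cellI (st (σ ++ [N])))
    (hr1 : (st (σ ++ [N])).s / 4 < r) (hr2 : r ≤ (st σ).s / 4) :
    volume (Ioo (x - r) x \ E) ≤ ENNReal.ofReal (16 * (st σ).w * r) ∧
    volume (Ioo x (x + r) \ E) ≤ ENNReal.ofReal (16 * (st σ).w * r) := by
  classical
  obtain ⟨hs, hw, hw8⟩ := ok_st σ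
  set C := (st σ).c with hC
  set S := (st σ).s with hS
  set W := (st σ).w with hW
  have hq : (0:ℝ) < (1/4:ℝ)^N := q_pos N
  have hq1 : ((1/4:ℝ))^N ≤ 1 := q_le_one N
  rw [st_child] at hx hr1
  simp only [cellI, child, mem_Icc, ← hC, ← hS, ← hW] at hx
  simp only [child, ← hS, ← hW] at hr1
  have hSq : (0:ℝ) < S * (1/4:ℝ)^N := mul_pos hs hq
  have hSqW : S * W * (1/4:ℝ)^N ≤ S * (1/4:ℝ)^N / 8 := by nlinarith
  have hSqW0 : (0:ℝ) < S * W * (1/4:ℝ)^N := by positivity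
  have hSqS : S * (1/4:ℝ)^N ≤ S := by nlinarith
  have hr0 : 0 < r := lt_trans (by positivity) hr1
  have hx1 : C + S * (1/4:ℝ)^N / 16 - S * W * (1/4:ℝ)^N / 512 ≤ x := hx.1
  have hx2 : x ≤ C + S * (1/4:ℝ)^N / 16 + S * W * (1/4:ℝ)^N / 512 := hx.2
  have hxlb : C < x := by nlinarith
  have hxub : x ≤ C + S/8 := by nlinarith
  -- generic bounds for membership in child `m`
  have hchild_mem : ∀ (m : ℕ) (y : ℝ), y ∈ cellI (st (σ ++ [m])) →
      C + S * (1/4:ℝ)^m / 16 - S * W * (1/4:ℝ)^m / 512 ≤ y ∧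
      y ≤ C + S * (1/4:ℝ)^m / 16 + S * W * (1/4:ℝ)^m / 512 := by
    intro m y hy
    rw [st_child] at hy
    simpa only [cellI, child, mem_Icc, ← hC, ← hS, ← hW] using hy
  have hWbd : ∀ m : ℕ, S * W * (1/4:ℝ)^m ≤ S * (1/4:ℝ)^m / 8 ∧ (0:ℝ) < S * W * (1/4:ℝ)^m := by
    intro m
    have := q_pos m
    constructor
    · nlinarith [mul_pos hs this]
    · positivity
  have hcellmem : ∀ y : ℝ, x - r < y → y < x + r → y ∈ cellI (st σ) := by
    intro y h1 h2
    simp only [cellI, mem_Icc, ← hC, ← hS]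
    constructor <;> nlinarith
  have hgapavoid : ∀ y : ℝ, x - r < y → y < x + r → y ∉ Lgap (st σ) ∪ Rgap (st σ) := by
    intro y h1 h2
    refine gaps_avoid_mid (st σ) ⟨hs, hw, hw8⟩ ?_ ?_ <;> rw [← hC, ← hS] <;> nlinarith
  -- the deficiency of the child cell
  have boundK : volume (cellI (st (σ ++ [N])) \ E) ≤ ENNReal.ofReal (10 * W * r) := by
    refine (cell_deficiency (σ ++ [N])).trans ?_
    apply ENNReal.ofReal_le_ofReal
    rw [st_child]
    simp only [child, ← hS, ← hW]
    have h1 : S * W * (1/4:ℝ)^N / 512 < 4 * r := by linarith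
    have h2 : W * (S * W * (1/4:ℝ)^N / 512) ≤ W * (4 * r) :=
      mul_le_mul_of_nonneg_left (le_of_lt h1) (le_of_lt hw)
    nlinarith
  -- LEFT ESTIMATE
  have claim1L : Ioo (x - r) x \ E ⊆ (cellI (st (σ ++ [N])) \ E) ∪
      (Ioo (x - r) x ∩ ⋃ m : ℕ, cellI (st (σ ++ [N + 1 + m]))) := by
    intro y hy
    obtain ⟨hyI, hyE⟩ := hy
    rw [mem_Ioo] at hyI
    have := cell_diff_E σ ⟨hcellmem y hyI.1 (by linarith [hyI.2]), hyE⟩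
    rcases this with hgap | hch
    · exact absurd hgap (hgapavoid y hyI.1 (by linarith [hyI.2]))
    · simp only [mem_iUnion] at hch
      obtain ⟨m, hm⟩ := hch
      rcases lt_trichotomy m N with hmN | hmN | hmN
      · exfalso
        have h4 : ((1/4:ℝ))^N ≤ (1/4:ℝ)^m * (1/4) := by
          have := hmono4 (Nat.succ_le_of_lt hmN)
          rwa [pow_succ] at this
        have e1 : S * (1/4:ℝ)^N ≤ S * ((1/4:ℝ)^m * (1/4)) :=
          mul_le_mul_of_nonneg_left h4 (le_of_lt hs)
        have e2 : S * W * (1/4:ℝ)^N ≤ S * W * ((1/4:ℝ)^m * (1/4)) :=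
          mul_le_mul_of_nonneg_left h4 (by positivity)
        have e3 := (hWbd m).1
        have e4 := (hWbd m).2
        have hb := (hchild_mem m y hm).1
        have hy2 := hyI.2
        nlinarith [q_pos m, mul_pos hs (q_pos m)]
      · subst hmN
        exact Or.inl ⟨hm, hyE⟩
      · right
        refine ⟨mem_Ioo.mpr hyI, mem_iUnion.mpr ⟨m - (N+1), ?_⟩⟩
        have : N + 1 + (m - (N+1)) = m := by omega
        rwa [this]
  have boundL2 : volume (Ioo (x - r) x ∩ ⋃ m : ℕ, cellI (st (σ ++ [N + 1 + m]))) ≤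
      ENNReal.ofReal (W * r) := by
    have hps : S * (1/4:ℝ)^(N+1) = S * (1/4:ℝ)^N * (1/4) := by rw [pow_succ]; ring
    have hpsW : S * W * (1/4:ℝ)^(N+1) = S * W * (1/4:ℝ)^N * (1/4) := by rw [pow_succ]; ring
    by_cases hcase : C + S * (1/4:ℝ)^(N+1) / 16 + S * W * (1/4:ℝ)^(N+1) / 512 ≤ x - r
    · have hempty : Ioo (x - r) x ∩ ⋃ m : ℕ, cellI (st (σ ++ [N + 1 + m])) = ∅ := by
        ext y
        simp only [mem_inter_iff, mem_iUnion, mem_empty_iff_false, iff_false, not_and, not_exists]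
        intro hyI k hymem
        have hb := (hchild_mem (N+1+k) y hymem).2
        have h4 : ((1/4:ℝ))^(N+1+k) ≤ (1/4:ℝ)^(N+1) := hmono4 (by omega)
        have e1 : S * (1/4:ℝ)^(N+1+k) ≤ S * (1/4:ℝ)^(N+1) :=
          mul_le_mul_of_nonneg_left h4 (le_of_lt hs)
        have e2 : S * W * (1/4:ℝ)^(N+1+k) ≤ S * W * (1/4:ℝ)^(N+1) :=
          mul_le_mul_of_nonneg_left h4 (by positivity)
        rw [mem_Ioo] at hyI
        linarith [hyI.1]
      rw [hempty, measure_empty]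
      exact zero_le
    · push_neg at hcase
      have hpr : S * (1/4:ℝ)^N / 16 ≤ 2 * r := by linarith
      calc volume (Ioo (x - r) x ∩ ⋃ m : ℕ, cellI (st (σ ++ [N + 1 + m])))
          ≤ volume (⋃ m : ℕ, cellI (st (σ ++ [N + 1 + m]))) := measure_mono inter_subset_right
        _ ≤ ENNReal.ofReal (S * W * (1/4:ℝ)^(N+1) / 192) := vol_children_tail σ (N+1)
        _ ≤ ENNReal.ofReal (W * r) := by
            apply ENNReal.ofReal_le_ofReal
            have h2 : (S * (1/4:ℝ)^N / 16) * W ≤ (2 * r) * W :=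
              mul_le_mul_of_nonneg_right hpr (le_of_lt hw)
            nlinarith [mul_pos hr0 hw, hpsW]
  have hleft : volume (Ioo (x - r) x \ E) ≤ ENNReal.ofReal (16 * W * r) := by
    refine (measure_mono claim1L).trans ((measure_union_le _ _).trans ?_)
    refine (add_le_add boundK boundL2).trans ?_
    rw [← ENNReal.ofReal_add (by positivity) (by positivity)]
    apply ENNReal.ofReal_le_ofReal
    nlinarith
  -- RIGHT ESTIMATE
  have claim1R : Ioo x (x + r) \ E ⊆ (cellI (st (σ ++ [N])) \ E) ∪
      (Ioo x (x + r) ∩ ⋃ m : ℕ, ⋃ (_ : m < N), cellI (st (σ ++ [m]))) := by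
    intro y hy
    obtain ⟨hyI, hyE⟩ := hy
    rw [mem_Ioo] at hyI
    have := cell_diff_E σ ⟨hcellmem y (by linarith [hyI.1]) hyI.2, hyE⟩
    rcases this with hgap | hch
    · exact absurd hgap (hgapavoid y (by linarith [hyI.1]) hyI.2)
    · simp only [mem_iUnion] at hch
      obtain ⟨m, hm⟩ := hch
      rcases lt_trichotomy m N with hmN | hmN | hmN
      · right
        refine ⟨mem_Ioo.mpr hyI, mem_iUnion.mpr ⟨m, mem_iUnion.mpr ⟨hmN, hm⟩⟩⟩
      · subst hmN
        exact Or.inl ⟨hm, hyE⟩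
      · exfalso
        have h4 : ((1/4:ℝ))^m ≤ (1/4:ℝ)^N * (1/4) := by
          have := hmono4 (Nat.succ_le_of_lt hmN)
          rwa [pow_succ] at this
        have e1 : S * (1/4:ℝ)^m ≤ S * ((1/4:ℝ)^N * (1/4)) :=
          mul_le_mul_of_nonneg_left h4 (le_of_lt hs)
        have e2 : S * W * (1/4:ℝ)^m ≤ S * W * ((1/4:ℝ)^N * (1/4)) :=
          mul_le_mul_of_nonneg_left h4 (by positivity)
        have e3 := (hWbd m).1
        have e4 := (hWbd m).2
        have hb := (hchild_mem m y hm).2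
        have hy1 := hyI.1
        nlinarith [q_pos m, mul_pos hs (q_pos m)]
  have boundR2 : volume (Ioo x (x + r) ∩ ⋃ m : ℕ, ⋃ (_ : m < N), cellI (st (σ ++ [m]))) ≤
      ENNReal.ofReal (W * r) := by
    rcases Nat.eq_zero_or_pos N with hN0 | hNpos
    · subst hN0
      have hempty : (⋃ m : ℕ, ⋃ (_ : m < 0), cellI (st (σ ++ [m]))) = (∅ : Set ℝ) := by
        simp
      rw [hempty, inter_empty, measure_empty]
      exact zero_le
    · have hNe : N - 1 + 1 = N := Nat.succ_pred_eq_of_pos hNpos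
      have hps : S * (1/4:ℝ)^N = S * (1/4:ℝ)^(N-1) * (1/4) := by
        conv_lhs => rw [← hNe]
        rw [pow_succ]; ring
      have hpsW : S * W * (1/4:ℝ)^N = S * W * (1/4:ℝ)^(N-1) * (1/4) := by
        conv_lhs => rw [← hNe]
        rw [pow_succ]; ring
      have eN1 := (hWbd (N-1)).1
      have eN2 := (hWbd (N-1)).2
      by_cases hcase : x + r ≤ C + S * (1/4:ℝ)^(N-1) / 16 - S * W * (1/4:ℝ)^(N-1) / 512
      · have hempty : Ioo x (x + r) ∩ ⋃ m : ℕ, ⋃ (_ : m < N), cellI (st (σ ++ [m])) = ∅ := by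
          ext y
          simp only [mem_inter_iff, mem_iUnion, mem_empty_iff_false, iff_false, not_and,
            not_exists]
          intro hyI m hmN hymem
          have hb := (hchild_mem m y hymem).1
          have h4 : ((1/4:ℝ))^(N-1) ≤ (1/4:ℝ)^m := hmono4 (by omega)
          have e1 : S * (1/4:ℝ)^(N-1) ≤ S * (1/4:ℝ)^m :=
            mul_le_mul_of_nonneg_left h4 (le_of_lt hs)
          have e2 : S * W * (1/4:ℝ)^(N-1) ≤ S * W * (1/4:ℝ)^m :=
            mul_le_mul_of_nonneg_left h4 (by positivity)
          have e3 := (hWbd m).1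
          have e5 := (hWbd m).2
          rw [mem_Ioo] at hyI
          nlinarith [hyI.2, mul_nonneg (sub_nonneg.mpr e1) (by linarith : (0:ℝ) ≤ 1/8 - W)]
        rw [hempty, measure_empty]
        exact zero_le
      · push_neg at hcase
        have hpr : S * (1/4:ℝ)^N / 16 ≤ r := by linarith
        have hex : ∃ m : ℕ, S * (1/4:ℝ)^m / 16 ≤ 3 * r := by
          obtain ⟨m, hm⟩ := exists_pow_lt_of_lt_one (show (0:ℝ) < 48 * r / S by positivity)
            (show (1/4:ℝ) < 1 by norm_num)
          refine ⟨m, ?_⟩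
          have hm' : ((1/4:ℝ))^m * S < (48 * r / S) * S := mul_lt_mul_of_pos_right hm hs
          rw [div_mul_cancel₀ _ (ne_of_gt hs)] at hm'
          linarith
        set m1 := Nat.find hex with hm1def
        have hm1 : S * (1/4:ℝ)^m1 / 16 ≤ 3 * r := Nat.find_spec hex
        have hincl : Ioo x (x + r) ∩ ⋃ m : ℕ, ⋃ (_ : m < N), cellI (st (σ ++ [m])) ⊆
            ⋃ k : ℕ, cellI (st (σ ++ [m1 + k])) := by
          intro y hy
          obtain ⟨hyI, hych⟩ := hy
          simp only [mem_iUnion] at hych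
          obtain ⟨m, hmN, hymem⟩ := hych
          rw [mem_Ioo] at hyI
          have hb := (hchild_mem m y hymem).1
          have e3 := (hWbd m).1
          have e5 := (hWbd m).2
          have hmet : S * (1/4:ℝ)^m / 16 ≤ 3 * r := by linarith [hyI.2]
          have hge : m1 ≤ m := by
            by_contra hcon
            exact Nat.find_min hex (by omega) hmet
          refine mem_iUnion.mpr ⟨m - m1, ?_⟩
          have : m1 + (m - m1) = m := by omega
          rwa [this]
        calc volume (Ioo x (x + r) ∩ ⋃ m : ℕ, ⋃ (_ : m < N), cellI (st (σ ++ [m])))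
            ≤ volume (⋃ k : ℕ, cellI (st (σ ++ [m1 + k]))) := measure_mono hincl
          _ ≤ ENNReal.ofReal (S * W * (1/4:ℝ)^m1 / 192) := vol_children_tail σ m1
          _ ≤ ENNReal.ofReal (W * r) := by
              apply ENNReal.ofReal_le_ofReal
              have h2 : (S * (1/4:ℝ)^m1 / 16) * W ≤ (3 * r) * W :=
                mul_le_mul_of_nonneg_right hm1 (le_of_lt hw)
              nlinarith [mul_pos hr0 hw]
  have hright : volume (Ioo x (x + r) \ E) ≤ ENNReal.ofReal (16 * W * r) := by
    refine (measure_mono claim1R).trans ((measure_union_le _ _).trans ?_)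
    refine (add_le_add boundK boundR2).trans ?_
    rw [← ENNReal.ofReal_add (by positivity) (by positivity)]
    apply ENNReal.ofReal_le_ofReal
    nlinarith
  exact ⟨hleft, hright⟩

/-! ### density plumbing -/

lemma ratio_le_one_L (A : Set ℝ) (x r : ℝ) (hr : 0 < r) :
    (volume (A ∩ Icc (x - r) x)).toReal / r ≤ 1 := by
  rw [div_le_one hr]
  have h1 : volume (A ∩ Icc (x - r) x) ≤ ENNReal.ofReal r := by
    refine (measure_mono inter_subset_right).trans ?_
    rw [Real.volume_Icc]
    apply ENNReal.ofReal_le_ofReal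
    linarith
  exact ENNReal.toReal_le_of_le_ofReal hr.le h1

lemma ratio_le_one_R (A : Set ℝ) (x r : ℝ) (hr : 0 < r) :
    (volume (A ∩ Icc x (x + r))).toReal / r ≤ 1 := by
  rw [div_le_one hr]
  have h1 : volume (A ∩ Icc x (x + r)) ≤ ENNReal.ofReal r := by
    refine (measure_mono inter_subset_right).trans ?_
    rw [Real.volume_Icc]
    apply ENNReal.ofReal_le_ofReal
    linarith
  exact ENNReal.toReal_le_of_le_ofReal hr.le h1

lemma dens_low (a b e : ℝ) (hab : a ≤ b) (he : 0 ≤ e)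
    (h : volume (Ioo a b \ E) ≤ ENNReal.ofReal e) :
    b - a - e ≤ (volume (E ∩ Icc a b)).toReal := by
  have hfinIoo : volume (Ioo a b) ≠ ⊤ := by
    rw [Real.volume_Ioo]; exact ENNReal.ofReal_ne_top
  have hfinIcc : volume (E ∩ Icc a b) ≠ ⊤ := by
    refine ne_top_of_le_ne_top ?_ (measure_mono inter_subset_right)
    rw [Real.volume_Icc]; exact ENNReal.ofReal_ne_top
  have key := measure_inter_add_diff (μ := volume) (Ioo a b) E_meas
  have f1 : volume (Ioo a b ∩ E) ≠ ⊤ :=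
    ne_top_of_le_ne_top hfinIoo (measure_mono inter_subset_left)
  have f2 : volume (Ioo a b \ E) ≠ ⊤ :=
    ne_top_of_le_ne_top hfinIoo (measure_mono diff_subset)
  have h1 : (volume (Ioo a b ∩ E)).toReal + (volume (Ioo a b \ E)).toReal = b - a := by
    rw [← ENNReal.toReal_add f1 f2, key, Real.volume_Ioo, ENNReal.toReal_ofReal (by linarith)]
  have h2 : (volume (Ioo a b \ E)).toReal ≤ e := ENNReal.toReal_le_of_le_ofReal he h
  have h3 : (volume (Ioo a b ∩ E)).toReal ≤ (volume (E ∩ Icc a b)).toReal := by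
    apply ENNReal.toReal_mono hfinIcc
    rw [inter_comm]
    exact measure_mono (inter_subset_inter_right _ Ioo_subset_Icc_self)
  linarith

/-! ### chain machinery -/

lemma go_w (d : St) (l : List ℕ) : (go d l).w = d.w * (1/2:ℝ)^l.length := by
  induction l generalizing d with
  | nil => simp [go]
  | cons n l ih =>
      show (go (child d n) l).w = _
      rw [ih]
      simp only [child, List.length_cons]
      rw [pow_succ]
      ring

lemma st_w (σ : List ℕ) : (st σ).w = (1/8:ℝ) * (1/2:ℝ)^σ.length := go_w root σ

lemma chain_fun (x : ℝ) (hx : ∀ L : ℕ, ∃ σ : List ℕ, σ.length = L ∧ x ∈ cellI (st σ)) :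
    ∃ b : ℕ → List ℕ, (∀ L, (b L).length = L) ∧ (∀ L, x ∈ cellI (st (b L))) ∧
      ∀ L, ∃ n, b (L+1) = b L ++ [n] := by
  choose b hblen hbmem using hx
  refine ⟨b, hblen, hbmem, ?_⟩
  intro L
  set τ := b (L+1) with hτ
  have htake : x ∈ cellI (st (τ.take L)) := by
    have : st τ = go (st (τ.take L)) (τ.drop L) := by
      conv_lhs => rw [← List.take_append_drop L τ]
      exact st_append _ _
    have h2 : cellI (st τ) ⊆ cellI (st (τ.take L)) := by
      rw [this]
      exact go_cell_subset _ (ok_st _) _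
    exact h2 (hbmem (L+1))
  have hlt : (τ.take L).length = L := by
    rw [List.length_take, hblen]
    omega
  have heq : b L = τ.take L := by
    by_contra hne
    exact same_length_disjoint _ _ root ok_root (by rw [hblen, hlt]) hne x (hbmem L) htake
  have hdrop : (τ.drop L).length = 1 := by
    rw [List.length_drop, hblen]
    omega
  obtain ⟨n, hn⟩ := List.length_eq_one_iff.mp hdrop
  refine ⟨n, ?_⟩
  conv_lhs => rw [← List.take_append_drop L τ]
  rw [hn, heq]

lemma s_child_le (d : St) (hd : Ok d) (n : ℕ) : (child d n).s ≤ d.s / 2 := by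
  obtain ⟨h1, h2, h3⟩ := hd
  have hq := q_pos n
  have hq1 := q_le_one n
  simp only [child]
  have hwq : d.w * (1/4:ℝ)^n ≤ 1/8 := by nlinarith
  nlinarith [mul_le_mul_of_nonneg_left hwq h1.le]

set_option maxHeartbeats 1000000 in
/-- SOSD at branch points. -/
lemma sosd_branch (x : ℝ) (hx : ∀ L : ℕ, ∃ σ : List ℕ, σ.length = L ∧ x ∈ cellI (st σ)) :
    StronglyOneSidedDenseAt E x := by
  classical
  obtain ⟨b, hblen, hbmem, hbstep⟩ := chain_fun x hx
  have hsdec : ∀ L, (st (b (L+1))).s ≤ (st (b L)).s / 2 := by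
    intro L
    obtain ⟨n, hn⟩ := hbstep L
    rw [hn, st_child]
    exact s_child_le _ (ok_st _) n
  have hspos : ∀ L, 0 < (st (b L)).s := fun L => (ok_st (b L)).1
  have hsanti : ∀ K L, K ≤ L → (st (b L)).s ≤ (st (b K)).s := by
    intro K L hKL
    have h := antitone_nat_of_succ_le (f := fun L => (st (b L)).s)
      (fun L => le_trans (hsdec L) (by linarith [hspos L]))
    exact h hKL
  have hsmall : ∀ L, (st (b L)).s ≤ (1/2:ℝ)^L * (st (b 0)).s := by
    intro L
    induction L with
    | zero => simp
    | succ L ih =>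
        have := hsdec L
        rw [pow_succ]
        nlinarith [hspos (L+1), hspos L, pow_pos (show (0:ℝ) < 1/2 by norm_num) L,
          hspos 0]
  intro rs hrpos hrlim
  rw [Metric.tendsto_atTop]
  intro ε hε
  -- choose a level L0 with 16 * w_{L0} < ε
  obtain ⟨L0, hL0⟩ : ∃ L : ℕ, 16 * (st (b L)).w < ε := by
    obtain ⟨L, hL⟩ := exists_pow_lt_of_lt_one (show (0:ℝ) < ε/2 by linarith)
      (show (1/2:ℝ) < 1 by norm_num)
    refine ⟨L, ?_⟩
    rw [st_w, hblen]
    linarith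
  have hwpos : 0 < (st (b L0)).w := (ok_st _).2.1
  -- eventually r n < s_{L0}/4
  rw [Metric.tendsto_atTop] at hrlim
  obtain ⟨M, hM⟩ := hrlim ((st (b L0)).s / 4) (by linarith [hspos L0])
  refine ⟨M, ?_⟩
  intro n hn
  set r := rs n with hr
  have hr0 : 0 < r := hrpos n
  have hrs : r < (st (b L0)).s / 4 := by
    have := hM n hn
    rw [Real.dist_eq, sub_zero, abs_of_pos hr0] at this
    exact this
  -- find the window level
  have hex : ∃ L : ℕ, (st (b L)).s / 4 < r := by
    obtain ⟨L, hL⟩ := exists_pow_lt_of_lt_one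
      (show (0:ℝ) < 4 * r / (st (b 0)).s from div_pos (by linarith) (hspos 0)) (show (1/2:ℝ) < 1 by norm_num)
    refine ⟨L, ?_⟩
    have h2 := hsmall L
    have h3 : (1/2:ℝ)^L * (st (b 0)).s < 4 * r := by
      have := mul_lt_mul_of_pos_right hL (hspos 0)
      rwa [div_mul_cancel₀ _ (ne_of_gt (hspos 0))] at this
    linarith
  set Lr := Nat.find hex with hLrdef
  have hLr : (st (b Lr)).s / 4 < r := Nat.find_spec hex
  have hLrpos : L0 < Lr := by
    by_contra hcon
    push_neg at hcon
    have := hsanti Lr L0 hcon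
    linarith
  set i := Lr - 1 with hidef
  have hii : i + 1 = Lr := by omega
  have hiL0 : L0 ≤ i := by omega
  have hwin1 : r ≤ (st (b i)).s / 4 := by
    have := Nat.find_min hex (show i < Lr by omega)
    linarith [not_lt.mp this]
  have hwin2 : (st (b (i+1))).s / 4 < r := by rw [hii]; exact hLr
  obtain ⟨N, hN⟩ := hbstep i
  have hxmem : x ∈ cellI (st (b i ++ [N])) := by rw [← hN]; exact hbmem (i+1)
  have hest := side_est (b i) N x r hxmem (by rw [hN] at hwin2; linarith) hwin1
  have hwle : (st (b i)).w ≤ (st (b L0)).w := by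
    rw [st_w, st_w, hblen, hblen]
    have := pow_le_pow_of_le_one (show (0:ℝ) ≤ 1/2 by norm_num)
      (show (1/2:ℝ) ≤ 1 by norm_num) hiL0
    linarith
  have hwipos : 0 < (st (b i)).w := (ok_st _).2.1
  have hebound : (0:ℝ) ≤ 16 * (st (b i)).w * r := by positivity
  -- lower bounds on both one-sided densities
  have hlow1 : r - 16 * (st (b i)).w * r ≤ (volume (E ∩ Icc (x - r) x)).toReal := by
    have := dens_low (x - r) x (16 * (st (b i)).w * r) (by linarith) hebound hest.1
    linarith
  have hlow2 : r - 16 * (st (b i)).w * r ≤ (volume (E ∩ Icc x (x + r))).toReal := by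
    have := dens_low x (x + r) (16 * (st (b i)).w * r) (by linarith) hebound hest.2
    linarith
  have hub := ratio_le_one_L E x r hr0
  have hub2 := ratio_le_one_R E x r hr0
  have hratio1 : 1 - 16 * (st (b L0)).w ≤ (volume (E ∩ Icc (x - r) x)).toReal / r := by
    rw [le_div_iff₀ hr0]
    nlinarith
  rw [Real.dist_eq]
  have hmaxle : max ((volume (E ∩ Icc (x - r) x)).toReal / r)
      ((volume (E ∩ Icc x (x + r))).toReal / r) ≤ 1 := max_le hub hub2
  have hmaxge : 1 - 16 * (st (b L0)).w ≤ max ((volume (E ∩ Icc (x - r) x)).toReal / r)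
      ((volume (E ∩ Icc x (x + r))).toReal / r) := le_max_of_le_left hratio1
  exact lt_of_le_of_lt (abs_le.mpr ⟨by linarith, by linarith⟩) hL0

set_option maxHeartbeats 1000000 in
/-- If `x ∈ E` lies in a cell but in none of its children, one side of `x` is locally solid. -/
lemma solid_side (x : ℝ) (hxE : x ∈ E) (σ : List ℕ) (hxc : x ∈ cellI (st σ))
    (hch : ∀ n, x ∉ cellI (st (σ ++ [n]))) :
    ∃ ρ : ℝ, 0 < ρ ∧ (Ioo (x - ρ) x ⊆ E ∨ Ioo x (x + ρ) ⊆ E) := by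
  classical
  obtain ⟨hs, hw, hw8⟩ := ok_st σ
  set C := (st σ).c with hC
  set S := (st σ).s with hS
  set W := (st σ).w with hW
  rw [cellI, mem_Icc, ← hC, ← hS] at hxc
  have hnotch : ∀ (n : ℕ) (y : ℝ),
      (y < C + S*(1/4:ℝ)^n/16 - S*W*(1/4:ℝ)^n/512 ∨ C + S*(1/4:ℝ)^n/16 + S*W*(1/4:ℝ)^n/512 < y) →
      y ∉ cellI (st (σ ++ [n])) := by
    intro n y hy hmem
    rw [st_child] at hmem
    simp only [cellI, child, mem_Icc, ← hC, ← hS, ← hW] at hmem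
    rcases hy with h | h
    · linarith [hmem.1]
    · linarith [hmem.2]
  have hchx : ∀ n : ℕ, x < C + S*(1/4:ℝ)^n/16 - S*W*(1/4:ℝ)^n/512 ∨
      C + S*(1/4:ℝ)^n/16 + S*W*(1/4:ℝ)^n/512 < x := by
    intro n
    by_contra hcon
    push_neg at hcon
    refine hch n ?_
    rw [st_child]
    simp only [cellI, child, mem_Icc, ← hC, ← hS, ← hW]
    exact ⟨hcon.1, hcon.2⟩
  have hnotL : ∀ y : ℝ, (y ≤ C - 3*S/4 ∨ C - 3*S/4 + 2*W*S ≤ y) → y ∉ Lgap (st σ) := by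
    intro y hy hmem
    simp only [Lgap, mem_Ioo, ← hC, ← hS, ← hW] at hmem
    rcases hy with h | h
    · linarith [hmem.1]
    · linarith [hmem.2]
  have hnotR : ∀ y : ℝ, (y ≤ C + 3*S/4 - 2*W*S ∨ C + 3*S/4 ≤ y) → y ∉ Rgap (st σ) := by
    intro y hy hmem
    simp only [Rgap, mem_Ioo, ← hC, ← hS, ← hW] at hmem
    rcases hy with h | h
    · linarith [hmem.1]
    · linarith [hmem.2]
  have hxgL : x ≤ C - 3*S/4 ∨ C - 3*S/4 + 2*W*S ≤ x := by
    by_contra hcon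
    push_neg at hcon
    refine hxE.2 (mem_iUnion.mpr ⟨σ, Or.inl ?_⟩)
    simp only [Lgap, mem_Ioo, ← hC, ← hS, ← hW]
    exact ⟨hcon.1, hcon.2⟩
  have hxgR : x ≤ C + 3*S/4 - 2*W*S ∨ C + 3*S/4 ≤ x := by
    by_contra hcon
    push_neg at hcon
    refine hxE.2 (mem_iUnion.mpr ⟨σ, Or.inr ?_⟩)
    simp only [Rgap, mem_Ioo, ← hC, ← hS, ← hW]
    exact ⟨hcon.1, hcon.2⟩
  have hWS : 2*W*S ≤ S/4 := by nlinarith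
  have hSWq : ∀ n : ℕ, S*W*(1/4:ℝ)^n ≤ S*(1/4:ℝ)^n/8 ∧ (0:ℝ) < S*W*(1/4:ℝ)^n ∧
      S*(1/4:ℝ)^n ≤ S := by
    intro n
    have hq := q_pos n
    have hq1 := q_le_one n
    refine ⟨by nlinarith [mul_pos hs hq], by positivity, by nlinarith⟩
  have hbot0 : ∀ n : ℕ, (0:ℝ) < S*(1/4:ℝ)^n/16 - S*W*(1/4:ℝ)^n/512 := by
    intro n
    obtain ⟨e1, e2, e3⟩ := hSWq n
    nlinarith [mul_pos hs (q_pos n)]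
  have htop8 : ∀ n : ℕ, S*(1/4:ℝ)^n/16 + S*W*(1/4:ℝ)^n/512 ≤ S/8 := by
    intro n
    obtain ⟨e1, e2, e3⟩ := hSWq n
    nlinarith
  have mksolid : ∀ y : ℝ, C - S ≤ y → y ≤ C + S →
      y ∉ Lgap (st σ) → y ∉ Rgap (st σ) → (∀ n, y ∉ cellI (st (σ ++ [n]))) → y ∈ E := by
    intro y h1 h2 h3 h4 h5
    refine solid σ y ?_ (fun h => h.elim h3 h4) h5
    rw [cellI, mem_Icc, ← hC, ← hS]
    exact ⟨h1, h2⟩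
  rcases lt_trichotomy x (C - 3*S/4) with hA | hA | hA
  · -- right solid up to the left gap
    refine ⟨C - 3*S/4 - x, by linarith, Or.inr ?_⟩
    intro y hy
    rw [mem_Ioo] at hy
    have hy2 : y < C - 3*S/4 := by linarith [hy.2]
    refine mksolid y (by linarith [hy.1, hxc.1]) (by linarith) ?_ ?_ ?_
    · exact hnotL y (Or.inl hy2.le)
    · exact hnotR y (Or.inl (by linarith))
    · intro n
      exact hnotch n y (Or.inl (by linarith [hbot0 n]))
  · -- x is the left endpoint of the left gap
    refine ⟨S/4, by linarith, Or.inl ?_⟩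
    intro y hy
    rw [mem_Ioo] at hy
    have hy2 : y < C - 3*S/4 := by linarith [hy.2]
    refine mksolid y (by linarith [hy.1]) (by linarith) ?_ ?_ ?_
    · exact hnotL y (Or.inl hy2.le)
    · exact hnotR y (Or.inl (by linarith))
    · intro n
      exact hnotch n y (Or.inl (by linarith [hbot0 n]))
  · have hxgL' : C - 3*S/4 + 2*W*S ≤ x := by
      rcases hxgL with h | h
      · linarith
      · exact h
    rcases lt_trichotomy x C with hB | hB | hB
    · -- strictly between gap and center: right solid up to center
      refine ⟨C - x, by linarith, Or.inr ?_⟩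
      intro y hy
      rw [mem_Ioo] at hy
      have hy2 : y < C := by linarith [hy.2]
      refine mksolid y (by linarith [hy.1]) (by linarith) ?_ ?_ ?_
      · exact hnotL y (Or.inr (by linarith [hy.1]))
      · exact hnotR y (Or.inl (by linarith))
      · intro n
        exact hnotch n y (Or.inl (by linarith [hbot0 n]))
    · -- x = C : left solid up to the left gap
      refine ⟨3*S/4 - 2*W*S, by linarith, Or.inl ?_⟩
      intro y hy
      rw [mem_Ioo] at hy
      have hy2 : y < C := by linarith [hy.2]
      refine mksolid y (by nlinarith [hy.1, mul_pos hw hs]) (by linarith) ?_ ?_ ?_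
      · exact hnotL y (Or.inr (by linarith [hy.1]))
      · exact hnotR y (Or.inl (by linarith))
      · intro n
        exact hnotch n y (Or.inl (by linarith [hbot0 n]))
    · -- x > C
      rcases le_or_gt x (C + 3*S/4 - 2*W*S) with hC1 | hC1
      · -- children zone: find the first child below x
        have hex : ∃ n : ℕ, S*(1/4:ℝ)^n/16 + S*W*(1/4:ℝ)^n/512 < x - C := by
          obtain ⟨n, hn⟩ := exists_pow_lt_of_lt_one
            (show (0:ℝ) < (x - C)/S from div_pos (by linarith) hs)
            (show (1/4:ℝ) < 1 by norm_num)
          obtain ⟨e1, e2, e3⟩ := hSWq n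
          have hn' : S * (1/4:ℝ)^n < x - C := by
            have := mul_lt_mul_of_pos_left hn hs
            rwa [mul_div_cancel₀ _ (ne_of_gt hs)] at this
          refine ⟨n, by nlinarith [mul_pos hs (q_pos n)]⟩
        set n1 := Nat.find hex with hn1def
        have hn1 : S*(1/4:ℝ)^n1/16 + S*W*(1/4:ℝ)^n1/512 < x - C := Nat.find_spec hex
        have hlt : ∀ m : ℕ, m < n1 → x < C + S*(1/4:ℝ)^m/16 - S*W*(1/4:ℝ)^m/512 := by
          intro m hm
          have hge : x - C ≤ S*(1/4:ℝ)^m/16 + S*W*(1/4:ℝ)^m/512 :=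
            le_of_not_gt (Nat.find_min hex hm)
          rcases hchx m with h | h
          · exact h
          · linarith
        refine ⟨(x - C) - (S*(1/4:ℝ)^n1/16 + S*W*(1/4:ℝ)^n1/512), by linarith, Or.inl ?_⟩
        intro y hy
        rw [mem_Ioo] at hy
        have hy1 : C + S*(1/4:ℝ)^n1/16 + S*W*(1/4:ℝ)^n1/512 < y := by linarith [hy.1]
        have hygt : C < y := by linarith [hbot0 n1, (hSWq n1).2.1, hy1]
        refine mksolid y (by linarith) (by linarith [hy.2]) ?_ ?_ ?_
        · exact hnotL y (Or.inr (by linarith))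
        · exact hnotR y (Or.inl (by linarith [hy.2]))
        · intro m
          rcases le_or_gt n1 m with hm | hm
          · refine hnotch m y (Or.inr ?_)
            have e1 : S*(1/4:ℝ)^m ≤ S*(1/4:ℝ)^n1 :=
              mul_le_mul_of_nonneg_left (hmono4 hm) hs.le
            have e2 : S*W*(1/4:ℝ)^m ≤ S*W*(1/4:ℝ)^n1 :=
              mul_le_mul_of_nonneg_left (hmono4 hm) (by positivity)
            linarith
          · exact hnotch m y (Or.inl (by linarith [hlt m hm, hy.2]))
      · -- x at or beyond the right gap
        have hxR : C + 3*S/4 ≤ x := by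
          rcases hxgR with h | h
          · linarith
          · exact h
        rcases lt_or_eq_of_le hxR with hG | hG
        · -- left solid down to the right gap
          refine ⟨x - (C + 3*S/4), by linarith, Or.inl ?_⟩
          intro y hy
          rw [mem_Ioo] at hy
          have hy1 : C + 3*S/4 < y := by linarith [hy.1]
          refine mksolid y (by linarith) (by linarith [hy.2, hxc.2]) ?_ ?_ ?_
          · exact hnotL y (Or.inr (by linarith))
          · exact hnotR y (Or.inr hy1.le)
          · intro n
            exact hnotch n y (Or.inr (by linarith [htop8 n]))
        · -- x is the right endpoint of the right gap: right solid
          refine ⟨S/4, by linarith, Or.inr ?_⟩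
          intro y hy
          rw [mem_Ioo] at hy
          have hy1 : C + 3*S/4 < y := by linarith [hy.1]
          refine mksolid y (by linarith) (by linarith [hy.2]) ?_ ?_ ?_
          · exact hnotL y (Or.inr (by linarith))
          · exact hnotR y (Or.inr hy1.le)
          · intro n
            exact hnotch n y (Or.inr (by linarith [htop8 n]))

/-- SOSD at points with a locally solid side. -/
lemma sosd_solidside (x ρ : ℝ) (hρ : 0 < ρ)
    (h : Ioo (x - ρ) x ⊆ E ∨ Ioo x (x + ρ) ⊆ E) : StronglyOneSidedDenseAt E x := by
  intro rs hrpos hrlim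
  rw [Metric.tendsto_atTop]
  intro ε hε
  rw [Metric.tendsto_atTop] at hrlim
  obtain ⟨M, hM⟩ := hrlim ρ hρ
  refine ⟨M, fun n hn => ?_⟩
  set r := rs n with hrdef
  have hr0 : 0 < r := hrpos n
  have hrρ : r < ρ := by
    have := hM n hn
    rwa [Real.dist_eq, sub_zero, abs_of_pos hr0] at this
  have hub := ratio_le_one_L E x r hr0
  have hub2 := ratio_le_one_R E x r hr0
  have hone : (1:ℝ) ≤ max ((volume (E ∩ Icc (x - r) x)).toReal / r)
      ((volume (E ∩ Icc x (x + r))).toReal / r) := by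
    rcases h with hL | hR
    · refine le_max_of_le_left ?_
      rw [le_div_iff₀ hr0, one_mul]
      have h1 : ENNReal.ofReal r ≤ volume (E ∩ Icc (x - r) x) := by
        have : Ioo (x - r) x ⊆ E ∩ Icc (x - r) x := fun y hy =>
          ⟨hL ⟨by linarith [hy.1], hy.2⟩, Ioo_subset_Icc_self hy⟩
        have h2 : volume (Ioo (x - r) x) ≤ volume (E ∩ Icc (x - r) x) := measure_mono this
        rwa [Real.volume_Ioo, sub_sub_cancel] at h2
      have hfin : volume (E ∩ Icc (x - r) x) ≠ ⊤ := by
        refine ne_top_of_le_ne_top ?_ (measure_mono inter_subset_right)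
        rw [Real.volume_Icc]; exact ENNReal.ofReal_ne_top
      have := ENNReal.toReal_mono hfin h1
      rwa [ENNReal.toReal_ofReal hr0.le] at this
    · refine le_max_of_le_right ?_
      rw [le_div_iff₀ hr0, one_mul]
      have h1 : ENNReal.ofReal r ≤ volume (E ∩ Icc x (x + r)) := by
        have : Ioo x (x + r) ⊆ E ∩ Icc x (x + r) := fun y hy =>
          ⟨hR ⟨hy.1, by linarith [hy.2]⟩, Ioo_subset_Icc_self hy⟩
        have h2 : volume (Ioo x (x + r)) ≤ volume (E ∩ Icc x (x + r)) := measure_mono this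
        rwa [Real.volume_Ioo, add_sub_cancel_left] at h2
      have hfin : volume (E ∩ Icc x (x + r)) ≠ ⊤ := by
        refine ne_top_of_le_ne_top ?_ (measure_mono inter_subset_right)
        rw [Real.volume_Icc]; exact ENNReal.ofReal_ne_top
      have := ENNReal.toReal_mono hfin h1
      rwa [ENNReal.toReal_ofReal hr0.le] at this
  rw [Real.dist_eq]
  exact lt_of_le_of_lt (abs_le.mpr ⟨by linarith [max_le hub hub2], by linarith [max_le hub hub2]⟩)
    (by linarith : (0:ℝ) < ε)

lemma sosd_all : StronglyOneSidedDense E := by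
  intro x hxE
  by_cases hbr : ∀ L : ℕ, ∃ σ : List ℕ, σ.length = L ∧ x ∈ cellI (st σ)
  · exact sosd_branch x hbr
  · push_neg at hbr
    classical
    have hex : ∃ L : ℕ, ∀ σ : List ℕ, σ.length = L → x ∉ cellI (st σ) := hbr
    have hspec := Nat.find_spec hex
    have hL1pos : Nat.find hex ≠ 0 := by
      intro h0
      refine hspec [] (by rw [h0]; rfl) ?_
      show x ∈ cellI root
      rw [cellI, mem_Icc]
      have h1 := hxE.1
      rw [mem_Icc] at h1
      constructor
      · show (root.c - root.s) ≤ x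
        simp only [root]
        linarith [h1.1]
      · show x ≤ root.c + root.s
        simp only [root]
        linarith [h1.2]
    obtain ⟨σ, hσlen, hσmem⟩ : ∃ σ : List ℕ, σ.length = Nat.find hex - 1 ∧ x ∈ cellI (st σ) := by
      have h2 := Nat.find_min hex (show Nat.find hex - 1 < Nat.find hex by omega)
      push_neg at h2
      exact h2
    have hch : ∀ n, x ∉ cellI (st (σ ++ [n])) := by
      intro n
      refine hspec (σ ++ [n]) ?_
      rw [List.length_append, hσlen]
      simp
      omega
    obtain ⟨ρ, hρ, hside⟩ := solid_side x hxE σ hσmem hch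
    exact sosd_solidside x ρ hρ hside

set_option maxHeartbeats 1000000 in
/-- Upper bound on both one-sided densities at the bad scale `7s/8`. -/
lemma bad_scale (σ : List ℕ) (N : ℕ) (x : ℝ) (hx : x ∈ cellI (st (σ ++ [N]))) :
    (volume (Ioo (x - 7*(st σ).s/8) x ∩ E)).toReal ≤ 7*(st σ).s/8 - 2*(st σ).w*(st σ).s ∧
    (volume (Ioo x (x + 7*(st σ).s/8) ∩ E)).toReal ≤ 7*(st σ).s/8 - 2*(st σ).w*(st σ).s := by
  obtain ⟨hs, hw, hw8⟩ := ok_st σ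
  set C := (st σ).c with hC
  set S := (st σ).s with hS
  set W := (st σ).w with hW
  rw [st_child] at hx
  simp only [cellI, child, mem_Icc, ← hC, ← hS, ← hW] at hx
  have hq := q_pos N
  have hq1 := q_le_one N
  have hSq : (0:ℝ) < S * (1/4:ℝ)^N := mul_pos hs hq
  have e1 : S * W * (1/4:ℝ)^N ≤ S * (1/4:ℝ)^N / 8 := by nlinarith
  have e2 : S * (1/4:ℝ)^N ≤ S := by nlinarith
  have hWS : 2*W*S ≤ S/4 := by nlinarith
  have hWS0 : 0 < 2*W*S := by positivity
  set r := 7*S/8 with hr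
  have hr0 : 0 < r := by rw [hr]; linarith
  have hLsub : Lgap (st σ) ⊆ Ioo (x - r) x := by
    intro y hy
    simp only [Lgap, mem_Ioo, ← hC, ← hS, ← hW] at hy
    rw [mem_Ioo]
    constructor
    · have : x - r ≤ C - 3*S/4 := by rw [hr]; linarith [hx.2]
      linarith [hy.1]
    · have : C - 3*S/4 + 2*W*S ≤ x := by linarith [hx.1]
      linarith [hy.2]
  have hRsub : Rgap (st σ) ⊆ Ioo x (x + r) := by
    intro y hy
    simp only [Rgap, mem_Ioo, ← hC, ← hS, ← hW] at hy
    rw [mem_Ioo]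
    constructor
    · have : x ≤ C + 3*S/4 - 2*W*S := by linarith [hx.2]
      linarith [hy.1]
    · have : C + 3*S/4 ≤ x + r := by rw [hr]; linarith [hx.1]
      linarith [hy.2]
  have hgapE : ∀ y, y ∈ Lgap (st σ) ∪ Rgap (st σ) → y ∉ E := by
    intro y hy hyE
    exact hyE.2 (mem_iUnion.mpr ⟨σ, hy⟩)
  have main : ∀ (I : Set ℝ) (G : Set ℝ), G ⊆ I → MeasurableSet G → volume I = ENNReal.ofReal r →
      volume G = ENNReal.ofReal (2*W*S) → (∀ y ∈ G, y ∉ E) →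
      (volume (I ∩ E)).toReal ≤ r - 2*W*S := by
    intro I G hGI hGmeas hvolI hvolG hGE
    have hsub2 : I ∩ E ⊆ I \ G := by
      intro y hy
      exact ⟨hy.1, fun hyG => hGE y hyG hy.2⟩
    have hdiff : volume (I \ G) = volume I - volume G :=
      measure_diff hGI hGmeas.nullMeasurableSet (by rw [hvolG]; exact ENNReal.ofReal_ne_top)
    have h2 : volume (I ∩ E) ≤ ENNReal.ofReal (r - 2*W*S) := by
      refine (measure_mono hsub2).trans ?_
      rw [hdiff, hvolI, hvolG, ← ENNReal.ofReal_sub _ (by positivity)]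
    exact ENNReal.toReal_le_of_le_ofReal (by linarith) h2
  constructor
  · refine main (Ioo (x - r) x) (Lgap (st σ)) hLsub measurableSet_Ioo ?_ ?_
      (fun y hy => hgapE y (Or.inl hy))
    · rw [Real.volume_Ioo]; ring_nf
    · exact (vol_gap (st σ) (ok_st σ)).1
  · refine main (Ioo x (x + r)) (Rgap (st σ)) hRsub measurableSet_Ioo ?_ ?_
      (fun y hy => hgapE y (Or.inr hy))
    · rw [Real.volume_Ioo]; ring_nf
    · exact (vol_gap (st σ) (ok_st σ)).2

set_option maxHeartbeats 2000000 in
lemma not_udt : ¬ UDT E := by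
  rintro ⟨γ, δ, hγm, hγ1, hδa, hδ0, hsub⟩
  classical
  have hγlt : ∀ n, γ n < 1 := fun n =>
    lt_of_lt_of_le (hγm (Nat.lt_succ_self n)) (hγm.monotone.ge_of_tendsto hγ1 (n+1))
  have hδpos : ∀ n, 0 < δ n := fun n =>
    lt_of_le_of_lt (hδa.antitone.le_of_tendsto hδ0 (n+1)) (hδa (Nat.lt_succ_self n))
  have hexJ : ∀ n, ∃ j : ℕ, (1/2:ℝ)^j < 1 - γ n := fun n =>
    exists_pow_lt_of_lt_one (by linarith [hγlt n]) (by norm_num)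
  set J : ℕ → ℕ := fun n => Nat.find (hexJ n) with hJ
  have hJs : ∀ n, (1/2:ℝ)^(J n) < 1 - γ n := fun n => Nat.find_spec (hexJ n)
  have hγge : ∀ n, 1 ≤ J n → 1 - 2*(1/2:ℝ)^(J n) ≤ γ n := by
    intro n h1
    have h2 : 1 - γ n ≤ (1/2:ℝ)^(J n - 1) := le_of_not_gt (Nat.find_min (hexJ n) (show J n - 1 < J n by omega))
    have hps : (1/2:ℝ)^(J n - 1) * (1/2) = (1/2:ℝ)^(J n) := by
      rw [← pow_succ]
      congr 1
      omega
    linarith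
  have hJtop : ∀ j0 : ℕ, ∃ M : ℕ, ∀ n ≥ M, j0 < J n := by
    intro j0
    have hlt1 : (1:ℝ) - (1/2:ℝ)^j0 < 1 := by
      have := pow_pos (show (0:ℝ) < 1/2 by norm_num) j0
      linarith
    have hh : ∀ᶠ n in atTop, (1:ℝ) - (1/2:ℝ)^j0 < γ n :=
      hγ1.eventually (eventually_gt_nhds hlt1)
    obtain ⟨M, hM⟩ := eventually_atTop.mp hh
    refine ⟨M, fun n hn => ?_⟩
    by_contra hcon
    push_neg at hcon
    have h4 : (1/2:ℝ)^j0 ≤ (1/2:ℝ)^(J n) :=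
      pow_le_pow_of_le_one (by norm_num) (by norm_num) hcon
    have := hJs n
    have := hM n hn
    linarith
  obtain ⟨k1, hk1⟩ := hJtop 3
  have hT : ∀ L : ℕ, ∃ t : ℝ, 0 < t ∧ ∀ n, k1 ≤ n → J n - 3 = L → t ≤ δ n := by
    intro L
    obtain ⟨M, hM⟩ := hJtop (L + 3)
    by_cases hA : ∃ n, k1 ≤ n ∧ J n - 3 = L
    · set F : Finset ℕ := (Finset.range M).filter (fun n => k1 ≤ n ∧ J n - 3 = L) with hF
      have hmemF : ∀ n, k1 ≤ n → J n - 3 = L → n ∈ F := by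
        intro n h1 h2
        have hnM : n < M := by
          by_contra hc
          push_neg at hc
          have := hM n hc
          omega
        simp only [hF, Finset.mem_filter, Finset.mem_range]
        exact ⟨hnM, h1, h2⟩
      obtain ⟨n0, hn01, hn02⟩ := hA
      have hFne : F.Nonempty := ⟨n0, hmemF n0 hn01 hn02⟩
      refine ⟨F.inf' hFne δ, ?_, ?_⟩
      · rw [Finset.lt_inf'_iff]
        exact fun n _ => hδpos n
      · intro n h1 h2
        exact Finset.inf'_le δ (hmemF n h1 h2)
    · exact ⟨1, one_pos, fun n h1 h2 => absurd ⟨n, h1, h2⟩ hA⟩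
  choose T hTpos hTspec using hT
  have hstep : ∀ (σ : List ℕ) (t : ℝ), 0 < t → ∃ n : ℕ, (st (σ ++ [n])).s ≤ t := by
    intro σ t ht
    obtain ⟨hs, hw, hw8⟩ := ok_st σ
    have hsw : (0:ℝ) < (st σ).s * (st σ).w := mul_pos hs hw
    obtain ⟨n, hn⟩ := exists_pow_lt_of_lt_one
      (show (0:ℝ) < t / ((st σ).s * (st σ).w) from div_pos ht hsw)
      (show (1/4:ℝ) < 1 by norm_num)
    refine ⟨n, ?_⟩
    rw [st_child]
    show (st σ).s * (st σ).w * (1/4:ℝ)^n / 512 ≤ t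
    have h2 : (1/4:ℝ)^n * ((st σ).s * (st σ).w) < t := (lt_div_iff₀ hsw).mp hn
    have h3 : (0:ℝ) < (1/4:ℝ)^n * ((st σ).s * (st σ).w) := by positivity
    nlinarith
  set b : ℕ → List ℕ := fun L => Nat.rec (motive := fun _ => List ℕ) []
    (fun L' ih => ih ++ [Classical.choose (hstep ih (T (L'+1)) (hTpos (L'+1)))]) L with hb
  have hbsucc : ∀ L, b (L+1) = b L ++ [Classical.choose (hstep (b L) (T (L+1)) (hTpos (L+1)))] :=
    fun L => rfl
  have hbs : ∀ L, (st (b (L+1))).s ≤ T (L+1) := fun L =>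
    Classical.choose_spec (hstep (b L) (T (L+1)) (hTpos (L+1)))
  have hblen : ∀ L, (b L).length = L := by
    intro L
    induction L with
    | zero => rfl
    | succ L ih =>
        rw [hbsucc L, List.length_append, ih]
        simp
  have hnested : ∀ L, cellI (st (b (L+1))) ⊆ cellI (st (b L)) := by
    intro L
    rw [hbsucc L, st_append]
    exact go_cell_subset _ (ok_st _) _
  have hne : ∀ L, (cellI (st (b L))).Nonempty := by
    intro L
    refine ⟨(st (b L)).c, ?_⟩
    rw [cellI, mem_Icc]
    have := (ok_st (b L)).1
    constructor <;> linarith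
  obtain ⟨x, hx⟩ := IsCompact.nonempty_iInter_of_sequence_nonempty_isCompact_isClosed
    (fun L => cellI (st (b L))) hnested hne isCompact_Icc (fun L => isClosed_Icc)
  have hxmem : ∀ L, x ∈ cellI (st (b L)) := fun L => mem_iInter.mp hx L
  have hxE : x ∈ E := branch_mem_E x (fun L => ⟨b L, hblen L, hxmem L⟩)
  have hsub2 := hsub hxE
  rw [mem_iInter] at hsub2
  have h3 := hsub2 k1
  simp only [mem_iUnion] at h3
  obtain ⟨n, hnk, hdens⟩ := h3
  have hJn4 : 3 < J n := hk1 n hnk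
  set L := J n - 3 with hLdef
  have hL1 : 1 ≤ L := by omega
  have hL' : L - 1 + 1 = L := by omega
  set N0 := Classical.choose (hstep (b L) (T (L+1)) (hTpos (L+1))) with hN0
  have hxL : x ∈ cellI (st (b L ++ [N0])) := by
    rw [← hbsucc L]
    exact hxmem (L+1)
  have hwL : (st (b L)).w = (1/2:ℝ)^(J n) := by
    rw [st_w, hblen]
    have hJL : J n = 3 + L := by omega
    rw [hJL, pow_add]
    norm_num
  have hsL : (st (b L)).s ≤ δ n := by
    have h5 : (st (b L)).s ≤ T L := by
      conv_lhs => rw [← hL']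
      rw [← hL']
      exact hbs (L-1)
    exact h5.trans (hTspec L n hnk rfl)
  obtain ⟨hsP, hwP, hw8P⟩ := ok_st (b L)
  set S := (st (b L)).s with hSdef
  set W := (st (b L)).w with hWdef
  set r := 7*S/8 with hrdef
  have hr0 : 0 < r := by rw [hrdef]; linarith
  have hrδ : r ≤ δ n := by rw [hrdef]; linarith
  have hbad := bad_scale (b L) N0 x hxL
  rw [← hSdef, ← hWdef, ← hrdef] at hbad
  simp only [densSet, mem_setOf_eq] at hdens
  have hmax := hdens r ⟨hr0, hrδ⟩
  have hWS0 : 0 < W * S := mul_pos hwP hsP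
  have hγn : 1 - 2*W ≤ γ n := by
    rw [hwL]
    exact hγge n (by omega)
  have hlt1 : (volume (Ioo (x - r) x ∩ E)).toReal / r < γ n := by
    rw [div_lt_iff₀ hr0]
    have : r - 2*W*S < γ n * r := by nlinarith
    linarith [hbad.1]
  have hlt2 : (volume (Ioo x (x + r) ∩ E)).toReal / r < γ n := by
    rw [div_lt_iff₀ hr0]
    have : r - 2*W*S < γ n * r := by nlinarith
    linarith [hbad.2]
  have := max_lt hlt1 hlt2
  linarith [hmax]

end SOSDX

/-- There exists a closed, strongly one-sided dense subset of `ℝ` which does not have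
uniform density type. -/
theorem exists_closed_SOSD_not_UDT :
    ∃ E : Set ℝ, IsClosed E ∧ StronglyOneSidedDense E ∧ ¬ UDT E := by
  exact ⟨SOSDX.E, SOSDX.E_closed, SOSDX.sosd_all, SOSDX.not_udt⟩
end

section
/- There exists a Lebesgue measurable set E ⊆ ℝ which has uniform density type (UDT) but does not have strong uniform density type (SUDT). -/
open MeasureTheory Set Filter Topology

/-- `E` has strong uniform density type. -/
def SUDT (E : Set ℝ) : Prop :=
  ∃ γ δ : ℕ → ℝ, StrictMono γ ∧ Tendsto γ atTop (𝓝 1) ∧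
    StrictAnti δ ∧ Tendsto δ atTop (𝓝 0) ∧
    E ⊆ ⋃ k : ℕ, ⋂ n, ⋂ (_ : n ≥ k), densSet E (γ n) (δ n)


noncomputable section UDTConstruction

structure Nd where
  v : ℝ
  l : ℝ
  i : ℕ
  g : ℕ

def gapOf (l : ℝ) (i : ℕ) : ℝ := l / (16 * (2 ^ (i + 1) - 1))

lemma two_pow_sub_one_pos (i : ℕ) : (1:ℝ) ≤ 2 ^ (i + 1) - 1 := by
  have : (2:ℝ) ^ 1 ≤ 2 ^ (i+1) := by
    apply pow_le_pow_right₀ (by norm_num) (by omega)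
  norm_num at this ⊢; linarith

lemma gapOf_pos {l : ℝ} (hl : 0 < l) (i : ℕ) : 0 < gapOf l i := by
  have h2 := two_pow_sub_one_pos i
  unfold gapOf; positivity

lemma gapOf_le {l : ℝ} (hl : 0 < l) (i : ℕ) : gapOf l i ≤ l / 16 := by
  have h2 := two_pow_sub_one_pos i
  unfold gapOf
  rw [div_le_div_iff₀ (by nlinarith) (by norm_num)]
  nlinarith

lemma gapOf_le' {l : ℝ} (hl : 0 < l) (i : ℕ) : gapOf l i ≤ (1/2) ^ i * l / 16 := by
  have h2 := two_pow_sub_one_pos i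
  have hp : (0:ℝ) < 2 ^ i := by positivity
  have key : (2:ℝ) ^ i ≤ 2 ^ (i + 1) - 1 := by
    have : (2:ℝ) ^ (i + 1) = 2 * 2 ^ i := by ring
    nlinarith
  have h12 : ((1:ℝ)/2) ^ i * (2 ^ i) = 1 := by
    rw [one_div, inv_pow, inv_mul_cancel₀ (by positivity)]
  unfold gapOf
  rw [div_le_div_iff₀ (by nlinarith) (by norm_num)]
  have h3 : (0:ℝ) < (1/2:ℝ) ^ i := by positivity
  nlinarith [mul_le_mul_of_nonneg_left key (le_of_lt (mul_pos h3 hl))]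

def stp (s : Nd) (b : Bool) : Nd :=
  match b with
  | false => ⟨s.v + s.l / 2, s.l / 4, s.i, s.g + 1⟩
  | true  => ⟨s.v + s.l - gapOf s.l s.i - s.l / 16, s.l / 16, s.g + 1, s.g + 1⟩

def nd (p : List Bool) : Nd := p.foldl stp ⟨0, 1, 0, 0⟩

def nv (p : List Bool) : ℝ := (nd p).v
def nl (p : List Bool) : ℝ := (nd p).l
def ni (p : List Bool) : ℕ := (nd p).i
def nG (p : List Bool) : ℝ := gapOf (nl p) (ni p)

lemma nd_concat (p : List Bool) (b : Bool) : nd (p ++ [b]) = stp (nd p) b := by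
  simp [nd, List.foldl_append]

lemma nv_false (p : List Bool) : nv (p ++ [false]) = nv p + nl p / 2 := by
  simp [nv, nl, nd_concat, stp]
lemma nl_false (p : List Bool) : nl (p ++ [false]) = nl p / 4 := by
  simp [nl, nd_concat, stp]
lemma ni_false (p : List Bool) : ni (p ++ [false]) = ni p := by
  simp [ni, nd_concat, stp]
lemma nv_true (p : List Bool) : nv (p ++ [true]) = nv p + nl p - nG p - nl p / 16 := by
  simp [nv, nl, ni, nG, nd_concat, stp]
lemma nl_true (p : List Bool) : nl (p ++ [true]) = nl p / 16 := by
  simp [nl, nd_concat, stp]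
lemma ni_true (p : List Bool) : ni (p ++ [true]) = (nd p).g + 1 := by
  simp [ni, nd_concat, stp]

lemma ng_eq_length (p : List Bool) : (nd p).g = p.length := by
  induction p using List.reverseRecOn with
  | nil => rfl
  | append_singleton p b ih =>
      cases b <;> simp [nd_concat, stp, ih]

lemma nl_pos (p : List Bool) : 0 < nl p := by
  induction p using List.reverseRecOn with
  | nil => norm_num [nl, nd]
  | append_singleton p b ih =>
      cases b
      · rw [nl_false]; linarith
      · rw [nl_true]; linarith

lemma gap_pos (p : List Bool) : 0 < nG p := gapOf_pos (nl_pos p) _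
lemma gap_le (p : List Bool) : nG p ≤ nl p / 16 := gapOf_le (nl_pos p) _
lemma gap_le' (p : List Bool) : nG p ≤ (1/2) ^ (ni p) * nl p / 16 := gapOf_le' (nl_pos p) _

lemma ni_le_length (p : List Bool) : ni p ≤ p.length := by
  induction p using List.reverseRecOn with
  | nil => simp [ni, nd]
  | append_singleton p b ih =>
      cases b
      · rw [ni_false]; simp; omega
      · rw [ni_true, ng_eq_length]; simp

lemma ni_mono (p : List Bool) (b : Bool) : ni p ≤ ni (p ++ [b]) := by
  cases b
  · rw [ni_false]
  · rw [ni_true, ng_eq_length]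
    have := ni_le_length p; omega

lemma nl_le_quarter (p : List Bool) (b : Bool) : nl (p ++ [b]) ≤ nl p / 4 := by
  have := nl_pos p
  cases b
  · rw [nl_false]
  · rw [nl_true]; linarith

lemma nl_ge_sixteenth (p : List Bool) (b : Bool) : nl p / 16 ≤ nl (p ++ [b]) := by
  have := nl_pos p
  cases b
  · rw [nl_false]; linarith
  · rw [nl_true]

lemma nl_le_pow (p : List Bool) : nl p ≤ (1/4) ^ p.length := by
  induction p using List.reverseRecOn with
  | nil => simp [nl, nd]
  | append_singleton p b ih =>
      calc nl (p ++ [b]) ≤ nl p / 4 := nl_le_quarter p b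
      _ ≤ (1/4) ^ p.length / 4 := by linarith
      _ = (1/4) ^ (p ++ [b]).length := by
          simp [pow_succ]; ring

lemma nl_ge_pow (p : List Bool) : (1/16 : ℝ) ^ p.length ≤ nl p := by
  induction p using List.reverseRecOn with
  | nil => simp [nl, nd]
  | append_singleton p b ih =>
      have h := nl_ge_sixteenth p b
      have : ((1:ℝ)/16) ^ (p ++ [b]).length = (1/16) ^ p.length / 16 := by
        simp [pow_succ]; ring
      rw [this]
      linarith

/-- the island of node `p` -/
def Ap (p : List Bool) : Set ℝ := Icc (nv p) (nv p + nl p)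

/-- the two (closed) gaps removed inside island `p`, flanking its dip child -/
def Kp (p : List Bool) : Set ℝ :=
  Icc (nv p + nl p - nl p/16 - 2*nG p) (nv p + nl p - nl p/16 - nG p) ∪
    Icc (nv p + nl p - nG p) (nv p + nl p)

/-- child range: every child island lies in here -/
def CR (p : List Bool) : Set ℝ := Icc (nv p + nl p / 2) (nv p + nl p - nG p)

def Ebad : Set ℝ := ⋃ p : List Bool, Kp p

def Eset : Set ℝ := Icc (-1 : ℝ) 1 \ Ebad

lemma child_sub_CR (p : List Bool) (b : Bool) : Ap (p ++ [b]) ⊆ CR p := by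
  have hl := nl_pos p
  have hG := gap_pos p
  have hG' := gap_le p
  cases b
  · rw [Ap, nv_false, nl_false, CR]
    apply Icc_subset_Icc <;> linarith
  · rw [Ap, nv_true, nl_true, CR]
    apply Icc_subset_Icc <;> linarith

lemma CR_sub_A (p : List Bool) : CR p ⊆ Ap p := by
  have hl := nl_pos p
  have hG := gap_pos p
  apply Icc_subset_Icc <;> linarith

lemma child_sub_A (p : List Bool) (b : Bool) : Ap (p ++ [b]) ⊆ Ap p :=
  (child_sub_CR p b).trans (CR_sub_A p)

lemma append_sub_A (p s : List Bool) : Ap (p ++ s) ⊆ Ap p := by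
  induction s using List.reverseRecOn with
  | nil => simp
  | append_singleton s b ih =>
      rw [← List.append_assoc]
      exact (child_sub_A (p ++ s) b).trans ih

lemma prefix_sub_A {p q : List Bool} (h : p <+: q) : Ap q ⊆ Ap p := by
  obtain ⟨s, rfl⟩ := h; exact append_sub_A p s

lemma strict_sub_CR {p q : List Bool} (h : p <+: q) (hne : q ≠ p) : Ap q ⊆ CR p := by
  obtain ⟨s, rfl⟩ := h
  rcases s with - | ⟨b, s⟩
  · simp at hne
  · have : p ++ b :: s = (p ++ [b]) ++ s := by simp
    rw [this]
    exact (append_sub_A (p ++ [b]) s).trans (child_sub_CR p b)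

lemma K_sub_A (p : List Bool) : Kp p ⊆ Ap p := by
  have hl := nl_pos p
  have hG := gap_pos p
  have hG' := gap_le p
  apply union_subset <;> apply Icc_subset_Icc <;> linarith

/-- K q sits in the far-right 1/8 of its island, above the child range of q -/
lemma K_high (p : List Bool) : Kp p ⊆ Icc (nv p + nl p - nl p/16 - 2*nG p) (nv p + nl p) := by
  have hl := nl_pos p
  have hG := gap_pos p
  have hG' := gap_le p
  apply union_subset <;> apply Icc_subset_Icc <;> linarith

/-- siblings are disjoint -/
lemma sib_disjoint (p : List Bool) : Ap (p ++ [false]) ∩ Ap (p ++ [true]) = ∅ := by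
  have hl := nl_pos p
  have hG := gap_pos p
  have hG' := gap_le p
  apply eq_empty_of_forall_notMem
  intro x hx
  rw [Ap, Ap, nv_false, nl_false, nv_true, nl_true] at hx
  obtain ⟨⟨_, h1⟩, ⟨h2, _⟩⟩ := hx
  linarith

/-- K q does not meet the false child -/
lemma K_disj_false (p : List Bool) : Kp p ∩ Ap (p ++ [false]) = ∅ := by
  have hl := nl_pos p
  have hG := gap_pos p
  have hG' := gap_le p
  apply eq_empty_of_forall_notMem
  intro x hx
  obtain ⟨hK, hA⟩ := hx
  have h1 := K_high p hK
  rw [Ap, nv_false, nl_false] at hA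
  obtain ⟨_, h2⟩ := hA
  obtain ⟨h3, _⟩ := h1
  linarith

/-- K q meets the true child only in its two endpoints -/
lemma K_inter_true (p : List Bool) :
    Kp p ∩ Ap (p ++ [true]) ⊆ {nv (p ++ [true]), nv (p ++ [true]) + nl (p ++ [true])} := by
  have hl := nl_pos p
  have hG := gap_pos p
  intro x ⟨hK, hA⟩
  rw [Ap, nv_true, nl_true] at hA
  obtain ⟨h1, h2⟩ := hA
  simp only [mem_insert_iff, mem_singleton_iff]
  rcases hK with ⟨h3, h4⟩ | ⟨h3, h4⟩
  · left; rw [nv_true]; linarith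
  · right; rw [nv_true, nl_true]; linarith

/-- K q does not meet strict descendants of the true child -/
lemma K_disj_deep (p : List Bool) {q : List Bool} (h : (p ++ [true]) <+: q)
    (hne : q ≠ p ++ [true]) : Kp p ∩ Ap q = ∅ := by
  apply eq_empty_of_forall_notMem
  intro x hx
  obtain ⟨hK, hA⟩ := hx
  have hCR := strict_sub_CR h hne hA
  have hmem : x ∈ ({nv (p ++ [true]), nv (p ++ [true]) + nl (p ++ [true])} : Set ℝ) :=
    K_inter_true p ⟨hK, (CR_sub_A _) hCR⟩
  have hl := nl_pos (p ++ [true])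
  have hG := gap_pos (p ++ [true])
  rw [CR] at hCR
  obtain ⟨h1, h2⟩ := hCR
  rcases hmem with rfl | rfl <;> linarith

/-- prefix trichotomy -/
lemma tri (p q : List Bool) :
    p <+: q ∨ q <+: p ∨ ∃ (r : List Bool) (b c : Bool), b ≠ c ∧ (r ++ [b]) <+: p ∧
      (r ++ [c]) <+: q := by
  induction p generalizing q with
  | nil => exact Or.inl (List.nil_prefix)
  | cons a p ih =>
      cases q with
      | nil => exact Or.inr (Or.inl (List.nil_prefix))
      | cons a' q' =>
          by_cases hb : a = a'
          · subst hb
            rcases ih q' with h | h | ⟨r, b, c, hbc, h1, h2⟩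
            · exact Or.inl (List.cons_prefix_cons.2 ⟨rfl, h⟩)
            · exact Or.inr (Or.inl (List.cons_prefix_cons.2 ⟨rfl, h⟩))
            · refine Or.inr (Or.inr ⟨a :: r, b, c, hbc, ?_, ?_⟩) <;>
                · rw [List.cons_append]
                  exact List.cons_prefix_cons.2 ⟨rfl, by assumption⟩
          · refine Or.inr (Or.inr ⟨[], a, a', hb, ?_, ?_⟩) <;> simp

/-- incomparable nodes: disjoint islands -/
lemma incomp_disjoint {p q : List Bool} (r : List Bool) {b c : Bool} (hbc : b ≠ c)
    (h1 : (r ++ [b]) <+: p) (h2 : (r ++ [c]) <+: q) : Ap p ∩ Ap q = ∅ := by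
  apply eq_empty_of_forall_notMem
  intro x hx
  obtain ⟨hp, hq⟩ := hx
  have hxb := prefix_sub_A h1 hp
  have hxc := prefix_sub_A h2 hq
  have : x ∈ Ap (r ++ [false]) ∩ Ap (r ++ [true]) := by
    cases b
    · cases c
      · simp at hbc
      · exact ⟨hxb, hxc⟩
    · cases c
      · exact ⟨hxc, hxb⟩
      · simp at hbc
  rw [sib_disjoint] at this
  exact this

/-- MASTER inclusion: island ∩ bad ⊆ own gaps ∪ children bad ∪ 2 endpoints -/
lemma master_incl (p : List Bool) :
    Ap p ∩ Ebad ⊆ Kp p ∪ (Ap (p ++ [false]) ∩ Ebad) ∪ (Ap (p ++ [true]) ∩ Ebad)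
      ∪ {nv p, nv p + nl p} := by
  intro x ⟨hxA, hxB⟩
  rw [Ebad, mem_iUnion] at hxB
  obtain ⟨q, hxK⟩ := hxB
  rcases tri p q with h | h | ⟨r, b, c, hbc, h1, h2⟩
  · by_cases hqp : q = p
    · subst hqp; exact Or.inl (Or.inl (Or.inl hxK))
    · -- q strict descendant: q = p ++ b :: s
      obtain ⟨s, rfl⟩ := h
      rcases s with - | ⟨b, s⟩
      · simp at hqp
      · have hsub : Kp (p ++ b :: s) ⊆ Ap (p ++ [b]) := by
          have : p ++ b :: s = (p ++ [b]) ++ s := by simp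
          rw [this]
          exact (K_sub_A _).trans (append_sub_A _ _)
        have hbad : x ∈ Ebad := by rw [Ebad, mem_iUnion]; exact ⟨_, hxK⟩
        cases b
        · exact Or.inl (Or.inl (Or.inr ⟨hsub hxK, hbad⟩))
        · exact Or.inl (Or.inr ⟨hsub hxK, hbad⟩)
  · -- q ancestor of p (possibly = p)
    by_cases hqp : p = q
    · subst hqp; exact Or.inl (Or.inl (Or.inl hxK))
    · obtain ⟨s, rfl⟩ := h
      rcases s with - | ⟨b, s⟩
      · simp at hqp
      · have hqb : (q ++ [b]) <+: (q ++ b :: s) := ⟨s, by simp⟩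
        cases b
        · exfalso
          have : x ∈ Kp q ∩ Ap (q ++ [false]) :=
            ⟨hxK, prefix_sub_A hqb hxA⟩
          rw [K_disj_false] at this; exact this
        · by_cases hs : q ++ true :: s = q ++ [true]
          · rw [hs] at hxA ⊢
            exact Or.inr (K_inter_true q ⟨hxK, hxA⟩)
          · exfalso
            have : x ∈ Kp q ∩ Ap (q ++ true :: s) := ⟨hxK, hxA⟩
            rw [K_disj_deep q hqb hs] at this
            exact this
  · exfalso
    have : x ∈ Ap q ∩ Ap p := ⟨(K_sub_A q) hxK, hxA⟩
    rw [incomp_disjoint r (Ne.symm hbc) h2 h1] at this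
    exact this

lemma Ebad_meas : MeasurableSet Ebad := by
  apply MeasurableSet.iUnion
  intro p
  exact (measurableSet_Icc.union measurableSet_Icc)

lemma Eset_meas : MeasurableSet Eset := measurableSet_Icc.diff Ebad_meas

lemma vol_Kp (p : List Bool) : volume (Kp p) ≤ ENNReal.ofReal (2 * nG p) := by
  have hG := gap_pos p
  calc volume (Kp p) ≤ volume (Icc (nv p + nl p - nl p/16 - 2*nG p) (nv p + nl p - nl p/16 - nG p))
        + volume (Icc (nv p + nl p - nG p) (nv p + nl p)) := measure_union_le _ _
  _ ≤ ENNReal.ofReal (2 * nG p) := by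
      rw [Real.volume_Icc, Real.volume_Icc]
      rw [← ENNReal.ofReal_add (by linarith) (by linarith)]
      apply ENNReal.ofReal_le_ofReal
      ring_nf
      linarith

lemma vol_Ap_lt_top (p : List Bool) : volume (Ap p ∩ Ebad) < ⊤ :=
  lt_of_le_of_lt (measure_mono (inter_subset_left)) (by rw [Ap, Real.volume_Icc]; exact ENNReal.ofReal_lt_top)

lemma gapmass_aux : ∀ d : ℕ, ∀ p : List Bool,
    volume (Ap p ∩ Ebad) ≤ ENNReal.ofReal ((1/2)^(ni p) * nl p / 4 + 2 * nl p * (1/2)^d) := by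
  intro d
  induction d with
  | zero =>
      intro p
      have hl := nl_pos p
      have h1 : (0:ℝ) ≤ (1/2)^(ni p) * nl p / 4 := by positivity
      calc volume (Ap p ∩ Ebad) ≤ volume (Ap p) := measure_mono inter_subset_left
      _ = ENNReal.ofReal (nl p) := by rw [Ap, Real.volume_Icc]; ring_nf
      _ ≤ _ := by
          apply ENNReal.ofReal_le_ofReal
          linarith
  | succ d ih =>
      intro p
      have hl := nl_pos p
      have hG := gap_pos p
      have hG' := gap_le' p
      have hhalf : (0:ℝ) < (1/2:ℝ)^(ni p) := by positivity
      have hd : (0:ℝ) < (1/2:ℝ)^d := by positivity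
      calc volume (Ap p ∩ Ebad)
          ≤ volume (Kp p ∪ (Ap (p ++ [false]) ∩ Ebad) ∪ (Ap (p ++ [true]) ∩ Ebad)
              ∪ {nv p, nv p + nl p}) := measure_mono (master_incl p)
      _ ≤ volume (Kp p ∪ (Ap (p ++ [false]) ∩ Ebad) ∪ (Ap (p ++ [true]) ∩ Ebad))
            + volume ({nv p, nv p + nl p} : Set ℝ) := measure_union_le _ _
      _ = volume (Kp p ∪ (Ap (p ++ [false]) ∩ Ebad) ∪ (Ap (p ++ [true]) ∩ Ebad)) := by
            have h2pts : volume ({nv p, nv p + nl p} : Set ℝ) = 0 := by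
              apply Set.Countable.measure_zero
              exact (Set.countable_singleton _).insert _
            rw [h2pts, add_zero]
      _ ≤ volume (Kp p ∪ (Ap (p ++ [false]) ∩ Ebad)) + volume (Ap (p ++ [true]) ∩ Ebad) :=
            measure_union_le _ _
      _ ≤ volume (Kp p) + volume (Ap (p ++ [false]) ∩ Ebad) + volume (Ap (p ++ [true]) ∩ Ebad) := by
            gcongr
            exact measure_union_le _ _
      _ ≤ ENNReal.ofReal (2 * nG p)
            + ENNReal.ofReal ((1/2)^(ni (p ++ [false])) * nl (p ++ [false]) / 4
                + 2 * nl (p ++ [false]) * (1/2)^d)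
            + ENNReal.ofReal ((1/2)^(ni (p ++ [true])) * nl (p ++ [true]) / 4
                + 2 * nl (p ++ [true]) * (1/2)^d) := by
            gcongr
            · exact vol_Kp p
            · exact ih _
            · exact ih _
      _ ≤ _ := by
            have hlf := nl_pos (p ++ [false])
            have hlt := nl_pos (p ++ [true])
            have hif : (0:ℝ) < (1/2:ℝ)^(ni (p ++ [false])) := by positivity
            have hit : (0:ℝ) < (1/2:ℝ)^(ni (p ++ [true])) := by positivity
            rw [← ENNReal.ofReal_add (by positivity) (by positivity),
                ← ENNReal.ofReal_add (by positivity) (by positivity)]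
            apply ENNReal.ofReal_le_ofReal
            rw [ni_false, nl_false, nl_true]
            have hmono : ((1:ℝ)/2)^(ni (p ++ [true])) ≤ (1/2)^(ni p) :=
              pow_le_pow_of_le_one (by norm_num) (by norm_num) (ni_mono p true)
            have hq : ((1:ℝ)/2)^(ni (p++[true])) * (nl p/16) / 4 ≤ (1/2)^(ni p) * (nl p/16) / 4 := by
              have h16 : (0:ℝ) < nl p / 16 := by linarith
              nlinarith
            have hpow : ((1:ℝ)/2)^(d+1) = (1/2)^d / 2 := by rw [pow_succ]; ring
            rw [hpow]
            nlinarith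
  
lemma gapmass (p : List Bool) :
    volume (Ap p ∩ Ebad) ≤ ENNReal.ofReal ((1/2)^(ni p) * nl p / 4) := by
  have hl := nl_pos p
  have h1 : (0:ℝ) ≤ (1/2)^(ni p) * nl p / 4 := by positivity
  rw [ENNReal.le_ofReal_iff_toReal_le (vol_Ap_lt_top p).ne h1]
  by_contra hcon
  push_neg at hcon
  have h2 : 0 < (volume (Ap p ∩ Ebad)).toReal - (1/2)^(ni p) * nl p / 4 := by linarith
  obtain ⟨d, hd⟩ := exists_pow_lt_of_lt_one
    (show 0 < ((volume (Ap p ∩ Ebad)).toReal - (1/2)^(ni p) * nl p / 4) / (2 * nl p) by positivity)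
    (show (1/2:ℝ) < 1 by norm_num)
  have h3 := gapmass_aux d p
  have h4 : (volume (Ap p ∩ Ebad)).toReal ≤ (1/2)^(ni p) * nl p / 4 + 2 * nl p * (1/2)^d := by
    apply ENNReal.toReal_le_of_le_ofReal _ h3
    have : (0:ℝ) < (1/2:ℝ)^d := by positivity
    positivity
  rw [lt_div_iff₀ (by positivity)] at hd
  nlinarith [hd]

lemma A_nil : Ap [] = Icc (0:ℝ) 1 := by
  have h1 : nv [] = 0 := rfl
  have h2 : nl [] = 1 := rfl
  rw [Ap, h1, h2, zero_add]

lemma A_sub_base (p : List Bool) : Ap p ⊆ Icc (0:ℝ) 1 := by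
  have := append_sub_A [] p
  simpa [A_nil] using this

lemma nv_nonneg (p : List Bool) : 0 ≤ nv p := by
  have h := (A_sub_base p) (left_mem_Icc.2 (by have := nl_pos p; unfold Ap at *; simp [Ap]; linarith))
  exact h.1

lemma nvl_le_one (p : List Bool) : nv p + nl p ≤ 1 := by
  have h := (A_sub_base p) (right_mem_Icc.2 (by have := nl_pos p; linarith))
  exact h.2

lemma v_mono_append (p s : List Bool) : nv p ≤ nv (p ++ s) := by
  have hmem : nv (p ++ s) ∈ Ap (p ++ s) :=
    left_mem_Icc.2 (by have := nl_pos (p ++ s); linarith)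
  exact ((append_sub_A p s) hmem).1

lemma Kq_gt (q : List Bool) {z : ℝ} (hz : z ∈ Kp q) : nv q + nl q/2 < z := by
  have h := (K_high q hz).1
  have hl := nl_pos q
  have hG := gap_le q
  linarith

/-- key lower bound: windows inside an island have small bad mass -/
lemma dens_low (p : List Bool) {a b : ℝ} (ha : nv p ≤ a) (hb : b ≤ nv p + nl p)
    (hab : a ≤ b) :
    ENNReal.ofReal ((b - a) - (1/2)^(ni p) * nl p / 4) ≤ volume (Ioo a b ∩ Eset) := by
  have hsub : Ioo a b \ Eset ⊆ Ap p ∩ Ebad := by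
    intro z ⟨hz1, hz2⟩
    have hzA : z ∈ Ap p := ⟨by linarith [hz1.1], by linarith [hz1.2]⟩
    have hzI : z ∈ Icc (-1:ℝ) 1 := by
      have := A_sub_base p hzA
      exact ⟨by linarith [this.1], this.2⟩
    refine ⟨hzA, ?_⟩
    by_contra hzB
    exact hz2 ⟨hzI, hzB⟩
  have key : volume (Ioo a b ∩ Eset) + volume (Ioo a b \ Eset) = volume (Ioo a b) :=
    measure_inter_add_diff _ Eset_meas
  have h1 : volume (Ioo a b \ Eset) ≤ ENNReal.ofReal ((1/2)^(ni p) * nl p / 4) :=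
    le_trans (measure_mono hsub) (gapmass p)
  have h2 : volume (Ioo a b) = ENNReal.ofReal (b - a) := Real.volume_Ioo
  have hfin : volume (Ioo a b \ Eset) ≠ ⊤ :=
    ne_of_lt (lt_of_le_of_lt h1 ENNReal.ofReal_lt_top)
  have hEq : volume (Ioo a b ∩ Eset) = ENNReal.ofReal (b-a) - volume (Ioo a b \ Eset) := by
    rw [← h2, ← key]
    exact (ENNReal.add_sub_cancel_right hfin).symm
  rw [hEq]
  have hMnn : (0:ℝ) ≤ (1/2)^(ni p) * nl p / 4 := by
    have hl := nl_pos p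
    positivity
  calc ENNReal.ofReal ((b - a) - (1/2)^(ni p) * nl p / 4)
      = ENNReal.ofReal (b-a) - ENNReal.ofReal ((1/2)^(ni p) * nl p / 4) :=
        ENNReal.ofReal_sub _ hMnn
  _ ≤ ENNReal.ofReal (b-a) - volume (Ioo a b \ Eset) := tsub_le_tsub_left h1 _

lemma S_sub_E (p : List Bool) :
    Icc (nv p) (nv p + nl p / 2) \ {nv p} ⊆ Eset := by
  intro x ⟨hx, hxne⟩
  have hl := nl_pos p
  constructor
  · have h := A_sub_base p ⟨hx.1, by linarith [hx.2]⟩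
    exact ⟨by linarith [h.1], h.2⟩
  · intro hbad
    rw [Ebad, mem_iUnion] at hbad
    obtain ⟨q, hq⟩ := hbad
    have hxA : x ∈ Ap p := ⟨hx.1, by linarith [hx.2]⟩
    rcases tri p q with h | h | ⟨r, b, c, hbc, h1, h2⟩
    · -- q descendant of p (or equal)
      by_cases hqp : q = p
      · subst hqp
        have := (K_high q hq).1
        have hG := gap_le q
        have := hx.2
        linarith
      · obtain ⟨s, rfl⟩ := h
        have hs : s ≠ [] := fun h' => hqp (by simp [h'])
        have hCRmem : nv (p ++ s) ∈ CR p := by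
          apply strict_sub_CR ⟨s, rfl⟩ (by simpa using hs)
          exact left_mem_Icc.2 (by have := nl_pos (p ++ s); linarith)
        have hKgt := Kq_gt (p ++ s) hq
        have hl' := nl_pos (p ++ s)
        have := hx.2
        have := hCRmem.1
        linarith
    · -- q ancestor of p (strict, since q = p handled above symmetric)
      by_cases hqp : p = q
      · subst hqp
        have := (K_high p hq).1
        have hG := gap_le p
        have := hx.2
        linarith
      · obtain ⟨s, rfl⟩ := h
        rcases s with - | ⟨b, s'⟩
        · simp at hqp
        · have hxA' : x ∈ Ap (q ++ b :: s') := hxA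
          have hqb : (q ++ [b]) <+: (q ++ b :: s') := ⟨s', by simp⟩
          cases b
          · have : x ∈ Kp q ∩ Ap (q ++ [false]) := ⟨hq, prefix_sub_A hqb hxA'⟩
            rw [K_disj_false] at this; exact this
          · by_cases hcase : q ++ true :: s' = q ++ [true]
            · rw [hcase] at hxA'
              have hmem := K_inter_true q ⟨hq, hxA'⟩
              rcases hmem with h' | h'
              · rw [← hcase] at h'; exact hxne h'
              · simp only [mem_singleton_iff] at h'
                rw [← hcase] at h'
                have h2 := hx.2
                rw [h'] at h2
                have hl3 := nl_pos (q ++ true :: s')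
                linarith
            · have : x ∈ Kp q ∩ Ap (q ++ true :: s') := ⟨hq, hxA'⟩
              rw [K_disj_deep q hqb hcase] at this
              exact this
    · have : x ∈ Ap p ∩ Ap q := ⟨hxA, K_sub_A q hq⟩
      rw [incomp_disjoint r hbc h1 h2] at this
      exact this

lemma neg_sub_E : Icc (-1:ℝ) 0 ⊆ Eset := by
  intro x hx
  refine ⟨⟨hx.1, by linarith [hx.2]⟩, ?_⟩
  intro hbad
  rw [Ebad, mem_iUnion] at hbad
  obtain ⟨q, hq⟩ := hbad
  have h1 := Kq_gt q hq
  have h2 := nv_nonneg q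
  have h3 := nl_pos q
  have := hx.2
  linarith

/-- interior of second solid block is in E -/
lemma S2_sub_E (p : List Bool) :
    Ioo (nv p + 3*nl p/4) (nv p + nl p - nl p/16 - 2*nG p) ⊆ Eset := by
  intro x hx
  have hl := nl_pos p
  have hG := gap_pos p
  have hG' := gap_le p
  obtain ⟨hx1, hx2⟩ := hx
  have hxA : x ∈ Ap p := ⟨by linarith, by linarith⟩
  constructor
  · have h := A_sub_base p hxA
    exact ⟨by linarith [h.1], h.2⟩
  · intro hbad
    rw [Ebad, mem_iUnion] at hbad
    obtain ⟨q, hq⟩ := hbad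
    rcases tri p q with h | h | ⟨r, b, c, hbc, h1, h2⟩
    · by_cases hqp : q = p
      · subst hqp
        have := (K_high q hq).1
        linarith
      · obtain ⟨s, rfl⟩ := h
        have hs : s ≠ [] := fun h' => hqp (by simp [h'])
        rcases s with - | ⟨b, s'⟩
        · exact absurd rfl hs
        · have hsub : Kp (p ++ b :: s') ⊆ Ap (p ++ [b]) := by
            have heq : p ++ b :: s' = (p ++ [b]) ++ s' := by simp
            rw [heq]
            exact (K_sub_A _).trans (append_sub_A _ _)
          have hxb := hsub hq
          cases b
          · -- false child lives in [v+l/2, v+3l/4]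
            rw [Ap, nv_false, nl_false] at hxb
            have := hxb.2
            linarith
          · -- true child lives ≥ v + l - G - l/16 > right end of S2
            rw [Ap, nv_true, nl_true] at hxb
            have := hxb.1
            linarith
    · -- q strict ancestor: endpoints of Ap p, but x is interior
      by_cases hqp : p = q
      · subst hqp
        have := (K_high p hq).1
        linarith
      · obtain ⟨s, rfl⟩ := h
        rcases s with - | ⟨b, s'⟩
        · simp at hqp
        · have hqb : (q ++ [b]) <+: (q ++ b :: s') := ⟨s', by simp⟩
          cases b
          · have : x ∈ Kp q ∩ Ap (q ++ [false]) := ⟨hq, prefix_sub_A hqb hxA⟩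
            rw [K_disj_false] at this; exact this
          · by_cases hcase : q ++ true :: s' = q ++ [true]
            · rw [hcase] at hxA
              have hmem := K_inter_true q ⟨hq, hxA⟩
              have hl2 := nl_pos (q ++ true :: s')
              rcases hmem with h' | h'
              · rw [← hcase] at h'
                rw [h'] at hx1
                linarith
              · simp only [mem_singleton_iff] at h'
                rw [← hcase] at h'
                rw [h'] at hx2
                linarith
            · have : x ∈ Kp q ∩ Ap (q ++ true :: s') := ⟨hq, hxA⟩
              rw [K_disj_deep q hqb hcase] at this
              exact this
    · have : x ∈ Ap p ∩ Ap q := ⟨hxA, K_sub_A q hq⟩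
      rw [incomp_disjoint r hbc h1 h2] at this
      exact this

/-- right endpoint of gap1 is the left endpoint of the true child: not in E -/
lemma vtrue_not_E (p : List Bool) : nv (p ++ [true]) ∉ Eset := by
  intro hE
  apply hE.2
  rw [Ebad, mem_iUnion]
  refine ⟨p, Or.inl ?_⟩
  have hl := nl_pos p
  have hG := gap_pos p
  rw [nv_true]
  constructor <;> [linarith; linarith]

/-- right endpoint of any island is in the second gap: not in E -/
lemma vright_not_E (p : List Bool) : nv p + nl p ∉ Eset := by
  intro hE
  apply hE.2
  rw [Ebad, mem_iUnion]
  refine ⟨p, Or.inr ?_⟩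
  have hG := gap_pos p
  constructor <;> [linarith; linarith]

/-- the island cover: points of E in an island are in a solid block or a child -/
lemma cover (p : List Bool) {x : ℝ} (hx : x ∈ Ap p) (hE : x ∈ Eset) :
    x ∈ Icc (nv p) (nv p + nl p/2) ∨ x ∈ Icc (nv p + 3*nl p/4) (nv p + nl p - nl p/16 - 2*nG p)
      ∨ x ∈ Ap (p ++ [false]) ∨ x ∈ Ap (p ++ [true]) := by
  have hl := nl_pos p
  have hG := gap_pos p
  have hG' := gap_le p
  obtain ⟨h1, h2⟩ := hx
  by_cases c1 : x ≤ nv p + nl p/2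
  · exact Or.inl ⟨h1, c1⟩
  by_cases c2 : x ≤ nv p + 3*nl p/4
  · refine Or.inr (Or.inr (Or.inl ?_))
    rw [Ap, nv_false, nl_false]
    constructor <;> linarith
  by_cases c3 : x ≤ nv p + nl p - nl p/16 - 2*nG p
  · exact Or.inr (Or.inl ⟨by linarith, c3⟩)
  by_cases c4 : x ≤ nv p + nl p - nl p/16 - nG p
  · exfalso
    exact hE.2 (by rw [Ebad, mem_iUnion]; exact ⟨p, Or.inl ⟨by linarith, c4⟩⟩)
  by_cases c5 : x ≤ nv p + nl p - nG p
  · refine Or.inr (Or.inr (Or.inr ?_))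
    rw [Ap, nv_true, nl_true]
    constructor <;> linarith
  · exfalso
    exact hE.2 (by rw [Ebad, mem_iUnion]; exact ⟨p, Or.inr ⟨by linarith, h2⟩⟩)

/-- islands of equal depth containing a common point coincide -/
lemma A_unique {x : ℝ} {p q : List Bool} (hlen : p.length = q.length)
    (hp : x ∈ Ap p) (hq : x ∈ Ap q) : p = q := by
  rcases tri p q with h | h | ⟨r, b, c, hbc, h1, h2⟩
  · exact List.IsPrefix.eq_of_length h hlen
  · exact (List.IsPrefix.eq_of_length h hlen.symm).symm
  · exfalso
    have : x ∈ Ap p ∩ Ap q := ⟨hp, hq⟩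
    rw [incomp_disjoint r hbc h1 h2] at this
    exact this

/-- dip estimate: the two-sided density at the dip radius is exactly 1 - (1/2)^(i+1) -/
lemma dip_vol (p : List Bool) {x : ℝ} (hx : x ∈ Ap (p ++ [true])) :
    volume (Ioo (x - (nl p/16 + nG p)) x ∩ Eset) ≤ ENNReal.ofReal (nl p/16) ∧
    volume (Ioo x (x + (nl p/16 + nG p)) ∩ Eset) ≤ ENNReal.ofReal (nl p/16) := by
  have hl := nl_pos p
  have hG := gap_pos p
  rw [Ap, nv_true, nl_true] at hx
  obtain ⟨hx1, hx2⟩ := hx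
  set r : ℝ := nl p/16 + nG p with hr
  have hrpos : 0 < r := by rw [hr]; linarith
  constructor
  · -- left window contains gap1 = Ioo (v_C - G) v_C
    have hgap : Ioo (nv p + nl p - nl p/16 - 2*nG p) (nv p + nl p - nl p/16 - nG p)
        ⊆ Ioo (x - r) x := by
      apply Ioo_subset_Ioo <;> (try simp only [hr]) <;> linarith
    have hgapE : Ioo (nv p + nl p - nl p/16 - 2*nG p) (nv p + nl p - nl p/16 - nG p)
        ∩ Eset = ∅ := by
      apply eq_empty_of_forall_notMem
      intro z ⟨hz, hzE⟩
      exact hzE.2 (by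
        rw [Ebad, mem_iUnion]
        exact ⟨p, Or.inl ⟨le_of_lt hz.1, le_of_lt hz.2⟩⟩)
    have hsub : Ioo (x - r) x ∩ Eset ⊆ Ioo (x-r) x \
        Ioo (nv p + nl p - nl p/16 - 2*nG p) (nv p + nl p - nl p/16 - nG p) := by
      intro z ⟨hz1, hz2⟩
      refine ⟨hz1, fun hzg => ?_⟩
      have : z ∈ (∅ : Set ℝ) := hgapE ▸ ⟨hzg, hz2⟩
      exact this
    calc volume (Ioo (x - r) x ∩ Eset) ≤ volume (Ioo (x-r) x \
          Ioo (nv p + nl p - nl p/16 - 2*nG p) (nv p + nl p - nl p/16 - nG p)) :=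
          measure_mono hsub
    _ = volume (Ioo (x-r) x) - volume (Ioo (nv p + nl p - nl p/16 - 2*nG p)
          (nv p + nl p - nl p/16 - nG p)) := by
          apply measure_diff hgap measurableSet_Ioo.nullMeasurableSet
          rw [Real.volume_Ioo]; exact ENNReal.ofReal_ne_top
    _ ≤ ENNReal.ofReal (nl p/16) := by
          rw [Real.volume_Ioo, Real.volume_Ioo]
          rw [← ENNReal.ofReal_sub _ (by linarith)]
          apply ENNReal.ofReal_le_ofReal
          rw [hr]; ring_nf; linarith
  · -- right window contains gap2 = Ioo (v+l-G) (v+l)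
    have hgap : Ioo (nv p + nl p - nG p) (nv p + nl p) ⊆ Ioo x (x + r) := by
      apply Ioo_subset_Ioo <;> (try simp only [hr]) <;> linarith
    have hgapE : Ioo (nv p + nl p - nG p) (nv p + nl p) ∩ Eset = ∅ := by
      apply eq_empty_of_forall_notMem
      intro z ⟨hz, hzE⟩
      exact hzE.2 (by
        rw [Ebad, mem_iUnion]
        exact ⟨p, Or.inr ⟨le_of_lt hz.1, le_of_lt hz.2⟩⟩)
    have hsub : Ioo x (x + r) ∩ Eset ⊆ Ioo x (x+r) \
        Ioo (nv p + nl p - nG p) (nv p + nl p) := by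
      intro z ⟨hz1, hz2⟩
      refine ⟨hz1, fun hzg => ?_⟩
      have : z ∈ (∅ : Set ℝ) := hgapE ▸ ⟨hzg, hz2⟩
      exact this
    calc volume (Ioo x (x + r) ∩ Eset) ≤ volume (Ioo x (x+r) \
          Ioo (nv p + nl p - nG p) (nv p + nl p)) := measure_mono hsub
    _ = volume (Ioo x (x+r)) - volume (Ioo (nv p + nl p - nG p) (nv p + nl p)) := by
          apply measure_diff hgap measurableSet_Ioo.nullMeasurableSet
          rw [Real.volume_Ioo]; exact ENNReal.ofReal_ne_top
    _ ≤ ENNReal.ofReal (nl p/16) := by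
          rw [Real.volume_Ioo, Real.volume_Ioo]
          rw [← ENNReal.ofReal_sub _ (by linarith)]
          apply ENNReal.ofReal_le_ofReal
          rw [hr]; ring_nf; linarith

/-! ### Part 5: chains, classification, UDT -/

def SolidAt (x : ℝ) : Prop := ∃ ρ > (0:ℝ),
  (∀ r, 0 < r → r ≤ ρ → volume (Ioo (x - r) x ∩ Eset) = ENNReal.ofReal r) ∨
  (∀ r, 0 < r → r ≤ ρ → volume (Ioo x (x + r) ∩ Eset) = ENNReal.ofReal r)

lemma solid_of_left {x ρ : ℝ} (hρ : 0 < ρ) (h : Ioo (x - ρ) x ⊆ Eset) : SolidAt x := by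
  refine ⟨ρ, hρ, Or.inl fun r hr hrρ => ?_⟩
  have hsub : Ioo (x - r) x ⊆ Eset := fun z hz => h ⟨by linarith [hz.1], hz.2⟩
  rw [inter_eq_self_of_subset_left hsub, Real.volume_Ioo]
  congr 1; ring

lemma solid_of_right {x ρ : ℝ} (hρ : 0 < ρ) (h : Ioo x (x + ρ) ⊆ Eset) : SolidAt x := by
  refine ⟨ρ, hρ, Or.inr fun r hr hrρ => ?_⟩
  have hsub : Ioo x (x + r) ⊆ Eset := fun z hz => h ⟨hz.1, by linarith [hz.2]⟩
  rw [inter_eq_self_of_subset_left hsub, Real.volume_Ioo]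
  congr 1; ring

/-- a chain for x: nested islands, one per depth -/
def EChain (x : ℝ) (c : ℕ → List Bool) : Prop :=
  (∀ k, (c k).length = k) ∧ (∀ k, x ∈ Ap (c k)) ∧ (∀ k, ∃ b, c (k+1) = c k ++ [b])

lemma classify (x : ℝ) (hxE : x ∈ Eset) : SolidAt x ∨ ∃ c, EChain x c := by
  rcases le_or_gt x 0 with hx0 | hx0
  · -- x ≤ 0 : inside [-1, 0]
    left
    rcases eq_or_lt_of_le hxE.1.1 with heq | hlt
    · apply solid_of_right (show (0:ℝ) < 1 by norm_num)
      intro z hz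
      exact neg_sub_E ⟨by linarith [hz.1], by linarith [hz.2, heq.symm]⟩
    · apply solid_of_left (show (0:ℝ) < x + 1 by linarith)
      intro z hz
      exact neg_sub_E ⟨by linarith [hz.1], by linarith [hz.2]⟩
  · by_cases hall : ∀ k : ℕ, ∃ p : List Bool, p.length = k ∧ x ∈ Ap p
    · right
      choose c hlen hmem using hall
      refine ⟨c, hlen, hmem, fun k => ?_⟩
      rcases List.eq_nil_or_concat (c (k+1)) with hnil | ⟨q, b, hq⟩
      · have := hlen (k+1); rw [hnil] at this; simp at this
      · rw [List.concat_eq_append] at hq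
        have hxq : x ∈ Ap q := child_sub_A q b (hq ▸ hmem (k+1))
        have hqlen : q.length = k := by
          have := hlen (k+1); rw [hq] at this; simp at this; exact this
        have : q = c k := A_unique (by rw [hqlen, hlen k]) hxq (hmem k)
        exact ⟨b, by rw [← this, ← hq]⟩
    · left
      push_neg at hall
      have h0 : ∃ p : List Bool, p.length = 0 ∧ x ∈ Ap p := by
        refine ⟨[], rfl, ?_⟩
        rw [A_nil]
        exact ⟨le_of_lt hx0, hxE.1.2⟩
      classical
      obtain ⟨k₀, hk₀⟩ := hall
      -- minimal failing depth
      have hex : ∃ k, ∀ p : List Bool, ¬(p.length = k ∧ x ∈ Ap p) := by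
        refine ⟨k₀, fun p hp => hk₀ p hp.1 hp.2⟩
      have hfail := Nat.find_spec hex
      have hk1pos : Nat.find hex ≠ 0 := by
        intro h
        obtain ⟨p, hp1, hp2⟩ := h0
        rw [h] at hfail
        exact hfail p ⟨hp1, hp2⟩
      obtain ⟨k, hk⟩ := Nat.exists_eq_succ_of_ne_zero hk1pos
      rw [hk] at hfail
      have hprev : ∃ p : List Bool, p.length = k ∧ x ∈ Ap p := by
        by_contra hcon
        push_neg at hcon
        have := Nat.find_min hex (show k < Nat.find hex by omega)
        exact this fun p hp => hcon p hp.1 hp.2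
      obtain ⟨p, hplen, hpx⟩ := hprev
      have hnof : x ∉ Ap (p ++ [false]) := fun hmem =>
        hfail (p ++ [false]) ⟨by simp [hplen], hmem⟩
      have hnot : x ∉ Ap (p ++ [true]) := fun hmem =>
        hfail (p ++ [true]) ⟨by simp [hplen], hmem⟩
      have hl := nl_pos p
      have hG := gap_pos p
      have hG' := gap_le p
      rcases cover p hpx hxE with hS | hS2 | hf | ht
      · -- first solid block
        rcases eq_or_lt_of_le hS.1 with heq | hlt
        · -- x = nv p
          rcases List.eq_nil_or_concat p with rfl | ⟨q, b, hqb⟩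
          · exfalso
            have hnil : nv ([] : List Bool) = 0 := rfl
            rw [← heq, hnil] at hx0
            exact lt_irrefl _ hx0
          · rw [List.concat_eq_append] at hqb
            subst hqb
            cases b
            · -- nv (q ++ [false]) = nv q + nl q / 2
              have hlq := nl_pos q
              have hxv : x = nv q + nl q / 2 := by rw [← heq, nv_false]
              apply solid_of_left (show (0:ℝ) < nl q / 2 by linarith)
              intro z hz
              apply S_sub_E q
              have h1 := hz.1
              have h2 := hz.2
              rw [hxv] at h1 h2
              refine ⟨⟨by linarith, by linarith⟩, ?_⟩
              simp only [mem_singleton_iff]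
              intro hzv
              rw [hzv] at h1
              linarith
            · exfalso
              rw [← heq] at hxE
              exact vtrue_not_E q hxE
        · -- nv p < x
          apply solid_of_left (show (0:ℝ) < x - nv p by linarith)
          intro z hz
          apply S_sub_E p
          refine ⟨⟨by linarith [hz.1], by linarith [hz.2, hS.2]⟩, ?_⟩
          simp only [mem_singleton_iff]
          intro hzv
          rw [hzv] at hz
          linarith [hz.1]
      · -- second solid block
        rcases eq_or_lt_of_le hS2.2 with heq | hlt2
        · exfalso
          apply hxE.2
          rw [Ebad, mem_iUnion]
          refine ⟨p, Or.inl ⟨le_of_eq heq.symm, ?_⟩⟩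
          rw [heq]
          linarith
        · rcases eq_or_lt_of_le hS2.1 with heq | hlt1
          · exfalso
            have : x = nv (p ++ [false]) + nl (p ++ [false]) := by
              rw [nv_false, nl_false, ← heq]; ring
            rw [this] at hxE
            exact vright_not_E (p ++ [false]) hxE
          · apply solid_of_right (show (0:ℝ) < (nv p + nl p - nl p/16 - 2*nG p) - x by linarith)
            intro z hz
            apply S2_sub_E p
            exact ⟨by linarith [hz.1], by linarith [hz.2]⟩
      · exact absurd hf hnof
      · exact absurd ht hnot

lemma chain_prefix {x : ℝ} {c : ℕ → List Bool} (hc : EChain x c) (k m : ℕ) :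
    ∃ s, c (k + m) = c k ++ s := by
  induction m with
  | zero => exact ⟨[], by simp⟩
  | succ m ih =>
      obtain ⟨s, hs⟩ := ih
      obtain ⟨b, hb⟩ := hc.2.2 (k + m)
      exact ⟨s ++ [b], by rw [show k + (m+1) = (k+m) + 1 from rfl, hb, hs, List.append_assoc]⟩

lemma chain_ni_mono {x : ℝ} {c : ℕ → List Bool} (hc : EChain x c) {k k' : ℕ}
    (h : k ≤ k') : ni (c k) ≤ ni (c k') := by
  induction k' with
  | zero => simp_all
  | succ k' ih =>
      rcases Nat.lt_or_ge k (k' + 1) with hlt | hge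
      · have h1 : ni (c k) ≤ ni (c k') := ih (by omega)
        obtain ⟨b, hb⟩ := hc.2.2 k'
        rw [hb]
        exact le_trans h1 (ni_mono (c k') b)
      · have : k = k' + 1 := by omega
        rw [this]

/-- UDT window estimate at a dip-recording depth -/
lemma udt_est {x : ℝ} {c : ℕ → List Bool} (hc : EChain x c) {n : ℕ}
    (hni : n ≤ ni (c n)) {r : ℝ} (hr : 0 < r) (hrn : r ≤ (1/16)^n / 2) :
    ENNReal.ofReal ((1 - 8*(1/2)^n) * r) ≤ volume (Ioo (x - r) x ∩ Eset) ∨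
    ENNReal.ofReal ((1 - 8*(1/2)^n) * r) ≤ volume (Ioo x (x + r) ∩ Eset) := by
  classical
  set P : ℕ → Prop := fun j => 2*r ≤ nl (c j) with hP
  have hPn : P n := by
    have h1 : ((1:ℝ)/16)^n ≤ nl (c n) := by
      have := nl_ge_pow (c n)
      rwa [hc.1 n] at this
    simp only [hP]
    linarith
  obtain ⟨K, hK⟩ := exists_pow_lt_of_lt_one (show (0:ℝ) < 2*r by linarith)
    (show (1/4:ℝ) < 1 by norm_num)
  have hnK : n ≤ K := by
    by_contra hcon
    push_neg at hcon
    have h1 : nl (c n) ≤ (1/4)^n := by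
      have := nl_le_pow (c n); rwa [hc.1 n] at this
    have h2 : ((1:ℝ)/4)^n ≤ (1/4)^K := by
      apply pow_le_pow_of_le_one (by norm_num) (by norm_num) (by omega)
    simp only [hP] at hPn
    linarith
  have hnotPK : ¬ P K := by
    simp only [hP]
    push_neg
    calc nl (c K) ≤ (1/4)^K := by have := nl_le_pow (c K); rwa [hc.1 K] at this
    _ < 2*r := hK
  set ks := Nat.findGreatest P K with hks
  have hksn : n ≤ ks := Nat.le_findGreatest hnK hPn
  have hksP : P ks := Nat.findGreatest_spec hnK hPn
  have hksK : ks ≤ K := Nat.findGreatest_le K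
  have hksltK : ks < K := lt_of_le_of_ne hksK (fun h => hnotPK (h ▸ hksP))
  have hnotP : ¬ P (ks + 1) := by
    apply Nat.findGreatest_is_greatest
    · rw [← hks]; exact Nat.lt_succ_self ks
    · omega
  -- length bounds
  have hup : nl (c ks) < 32 * r := by
    simp only [hP] at hnotP
    push_neg at hnotP
    obtain ⟨b, hb⟩ := hc.2.2 ks
    have h16 := nl_ge_sixteenth (c ks) b
    rw [← hb] at h16
    linarith
  have hlow : 2*r ≤ nl (c ks) := hksP
  have hnik : n ≤ ni (c ks) := le_trans hni (chain_ni_mono hc hksn)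
  -- bad-mass bound inside island c ks
  have hbound : (1/2)^(ni (c ks)) * nl (c ks) / 4 ≤ 8 * (1/2)^n * r := by
    have hmono : ((1:ℝ)/2)^(ni (c ks)) ≤ (1/2)^n :=
      pow_le_pow_of_le_one (by norm_num) (by norm_num) hnik
    have hpn : (0:ℝ) < (1/2:ℝ)^n := by positivity
    have hpk : (0:ℝ) ≤ (1/2:ℝ)^(ni (c ks)) := by positivity
    nlinarith [nl_pos (c ks)]
  have hxmem := hc.2.1 ks
  obtain ⟨hxl, hxr⟩ := hxmem
  rcases le_or_gt (nv (c ks) + r) x with hside | hside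
  · -- left window fits
    left
    have h1 := dens_low (c ks) (show nv (c ks) ≤ x - r by linarith)
      (show x ≤ nv (c ks) + nl (c ks) from hxr) (by linarith)
    refine le_trans ?_ h1
    apply ENNReal.ofReal_le_ofReal
    ring_nf
    ring_nf at hbound
    linarith
  · -- right window fits
    right
    have hxup : x + r ≤ nv (c ks) + nl (c ks) := by linarith
    have h1 := dens_low (c ks) (show nv (c ks) ≤ x from hxl) hxup (by linarith)
    refine le_trans ?_ h1
    apply ENNReal.ofReal_le_ofReal
    ring_nf
    ring_nf at hbound
    linarith

lemma chain_v_mono {x : ℝ} {c : ℕ → List Bool} (hc : EChain x c) {k k' : ℕ} (h : k ≤ k') :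
    nv (c k) ≤ nv (c k') := by
  obtain ⟨m, rfl⟩ := Nat.exists_eq_add_of_le h
  obtain ⟨s, hs⟩ := chain_prefix hc k m
  rw [hs]
  exact v_mono_append _ _

lemma chain_approx {x : ℝ} {c : ℕ → List Bool} (hc : EChain x c) (k : ℕ) :
    x - nv (c k) ≤ (1/4)^k := by
  have h1 := (hc.2.1 k).2
  have h2 := nl_le_pow (c k)
  rw [hc.1 k] at h2
  linarith

lemma evfalse_solid {x : ℝ} {c : ℕ → List Bool} (hc : EChain x c) (K : ℕ)
    (hK : ∀ m, K ≤ m → c (m+1) = c m ++ [false]) : SolidAt x := by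
  classical
  have hvstep : ∀ m, K ≤ m → nv (c (m+1)) = nv (c m) + nl (c m) / 2 := by
    intro m hm
    rw [hK m hm, nv_false]
  have hxK2 : nv (c (K+1)) < x := by
    have h1 : nv (c (K+2)) = nv (c (K+1)) + nl (c (K+1)) / 2 := hvstep (K+1) (by omega)
    have h2 := (hc.2.1 (K+2)).1
    have h3 := nl_pos (c (K+1))
    linarith
  -- every point of [v_{K+1}, x) is in E or is some nv (c m)
  have claim : ∀ y, nv (c (K+1)) ≤ y → y < x → y ∈ Eset ∨ ∃ m, y = nv (c m) := by
    intro y hy1 hy2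
    have hPex : ∃ m, y < nv (c m) := by
      obtain ⟨m, hm⟩ := exists_pow_lt_of_lt_one (show (0:ℝ) < x - y by linarith)
        (show (1/4:ℝ) < 1 by norm_num)
      refine ⟨m, ?_⟩
      have := chain_approx hc m
      linarith
    set m' := Nat.find hPex with hm'
    have hspec : y < nv (c m') := Nat.find_spec hPex
    have hm'KB : K + 1 < m' := by
      by_contra hcon
      push_neg at hcon
      have : nv (c m') ≤ nv (c (K+1)) := chain_v_mono hc hcon
      linarith
    have hprev : nv (c (m' - 1)) ≤ y := by
      by_contra hcon
      push_neg at hcon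
      exact (Nat.find_min hPex (show m' - 1 < m' by omega)) hcon
    have hm1 : (m' - 1) + 1 = m' := by omega
    have hstep : nv (c m') = nv (c (m'-1)) + nl (c (m'-1)) / 2 := by
      have := hvstep (m'-1) (by omega)
      rwa [hm1] at this
    rcases eq_or_lt_of_le hprev with heq | hlt
    · exact Or.inr ⟨m' - 1, heq.symm⟩
    · left
      apply S_sub_E (c (m'-1))
      refine ⟨⟨le_of_lt hlt, by linarith [hstep, hspec]⟩, ?_⟩
      simp only [mem_singleton_iff]
      intro h; rw [h] at hlt; exact lt_irrefl _ hlt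
  refine ⟨x - nv (c (K+1)), by linarith, Or.inl fun r hr hrρ => ?_⟩
  have hnull : volume (⋃ m : ℕ, ({nv (c m)} : Set ℝ)) = 0 :=
    measure_iUnion_null fun m => measure_singleton _
  have hdiff : volume (Ioo (x - r) x \ Eset) = 0 := by
    apply measure_mono_null _ hnull
    intro z ⟨hz1, hz2⟩
    have h1 : nv (c (K+1)) ≤ z := by linarith [hz1.1]
    rcases claim z h1 hz1.2 with hE | ⟨m, hm⟩
    · exact absurd hE hz2
    · rw [mem_iUnion]; exact ⟨m, hm⟩
  have key : volume (Ioo (x-r) x ∩ Eset) + volume (Ioo (x-r) x \ Eset) = volume (Ioo (x-r) x) :=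
    measure_inter_add_diff _ Eset_meas
  rw [hdiff, add_zero] at key
  rw [key, Real.volume_Ioo]
  congr 1; ring

/-- SolidAt points are in every densSet with γ ≤ 1, once δ is small -/
lemma solid_point {x : ℝ} (h : SolidAt x) {γ δ : ℝ} (hγ : γ ≤ 1) (hδ : 0 < δ)
    (hsm : δ ≤ h.choose) : x ∈ densSet Eset γ δ := by
  intro r hr
  obtain ⟨hr0, hrδ⟩ := hr
  have hρ := h.choose_spec
  rcases hρ.2 with hside | hside
  · have hvol := hside r hr0 (le_trans hrδ hsm)
    have : (volume (Ioo (x - r) x ∩ Eset)).toReal / r = 1 := by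
      rw [hvol, ENNReal.toReal_ofReal (le_of_lt hr0)]
      field_simp
    calc γ ≤ 1 := hγ
    _ = _ := this.symm
    _ ≤ _ := le_max_left _ _
  · have hvol := hside r hr0 (le_trans hrδ hsm)
    have : (volume (Ioo x (x + r) ∩ Eset)).toReal / r = 1 := by
      rw [hvol, ENNReal.toReal_ofReal (le_of_lt hr0)]
      field_simp
    calc γ ≤ 1 := hγ
    _ = _ := this.symm
    _ ≤ _ := le_max_right _ _

/-- the per-point UDT statement -/
lemma udt_point {x : ℝ} (hxE : x ∈ Eset) (k : ℕ) :
    ∃ n, k ≤ n ∧ x ∈ densSet Eset (1 - 8*(1/2)^n) ((1/16)^n / 2) := by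
  classical
  have hsolid : SolidAt x → ∃ n, k ≤ n ∧ x ∈ densSet Eset (1 - 8*(1/2)^n) ((1/16)^n / 2) := by
    intro h
    obtain ⟨N, hN⟩ := exists_pow_lt_of_lt_one (show (0:ℝ) < h.choose from h.choose_spec.1)
      (show (1/16:ℝ) < 1 by norm_num)
    refine ⟨max k N, le_max_left _ _, ?_⟩
    apply solid_point h
    · have : (0:ℝ) < 8*(1/2)^(max k N) := by positivity
      linarith
    · have : (0:ℝ) < (1/16:ℝ)^(max k N) := by positivity
      linarith
    · have h1 : ((1:ℝ)/16)^(max k N) ≤ (1/16)^N :=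
        pow_le_pow_of_le_one (by norm_num) (by norm_num) (le_max_right _ _)
      have h2 : (0:ℝ) < (1/16:ℝ)^(max k N) := by positivity
      linarith
  rcases classify x hxE with h | ⟨c, hc⟩
  · exact hsolid h
  · by_cases hdip : ∀ j, ∃ m, j ≤ m ∧ c (m+1) = c m ++ [true]
    · obtain ⟨m, hmk, hmtrue⟩ := hdip k
      refine ⟨m + 1, by omega, ?_⟩
      have hni : m + 1 ≤ ni (c (m+1)) := by
        rw [hmtrue, ni_true, ng_eq_length, hc.1 m]
      intro r hr
      rw [ge_iff_le]
      obtain ⟨hr0, hrδ⟩ := hr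
      have hest := udt_est hc hni hr0 hrδ
      have hfin : ∀ a b : ℝ, volume (Ioo a b ∩ Eset) ≠ ⊤ := fun a b =>
        ne_top_of_le_ne_top (by rw [Real.volume_Ioo]; exact ENNReal.ofReal_ne_top)
          (measure_mono inter_subset_left)
      rcases le_or_gt ((1:ℝ) - 8*(1/2)^(m+1)) 0 with hneg | hpos
      · have h1 : (0:ℝ) ≤ (volume (Ioo (x-r) x ∩ Eset)).toReal / r :=
          div_nonneg ENNReal.toReal_nonneg (le_of_lt hr0)
        calc (1:ℝ) - 8*(1/2)^(m+1) ≤ 0 := hneg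
        _ ≤ _ := le_trans h1 (le_max_left _ _)
      · rcases hest with hest | hest
        · have h2 : (1 - 8*(1/2)^(m+1)) * r ≤ (volume (Ioo (x-r) x ∩ Eset)).toReal :=
            (ENNReal.ofReal_le_iff_le_toReal (hfin _ _)).1 hest
          have : (1 - 8*(1/2)^(m+1)) ≤ (volume (Ioo (x-r) x ∩ Eset)).toReal / r := by
            rw [le_div_iff₀ hr0]
            linarith
          exact le_trans this (le_max_left _ _)
        · have h2 : (1 - 8*(1/2)^(m+1)) * r ≤ (volume (Ioo x (x+r) ∩ Eset)).toReal :=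
            (ENNReal.ofReal_le_iff_le_toReal (hfin _ _)).1 hest
          have : (1 - 8*(1/2)^(m+1)) ≤ (volume (Ioo x (x+r) ∩ Eset)).toReal / r := by
            rw [le_div_iff₀ hr0]
            linarith
          exact le_trans this (le_max_right _ _)
    · push_neg at hdip
      obtain ⟨K, hK⟩ := hdip
      apply hsolid
      apply evfalse_solid hc K
      intro m hm
      obtain ⟨b, hb⟩ := hc.2.2 m
      cases b
      · exact hb
      · exact absurd hb (hK m hm)

/-! ### Part 6: defeating SUDT -/


/-- gaps of non-prefix nodes meet an island only at its endpoints -/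
lemma K_anc {q p : List Bool} (hnp : ¬ (p <+: q)) :
    Kp q ∩ Ap p ⊆ {nv p, nv p + nl p} := by
  intro z ⟨hzK, hzA⟩
  rcases tri p q with h | h | ⟨r, b, c, hbc, h1, h2⟩
  · exact absurd h hnp
  · by_cases hqp : p = q
    · exact absurd (hqp ▸ List.prefix_refl p) hnp
    · obtain ⟨s, rfl⟩ := h
      rcases s with - | ⟨b, s'⟩
      · simp at hqp
      · have hqb : (q ++ [b]) <+: (q ++ b :: s') := ⟨s', by simp⟩
        cases b
        · exfalso
          have : z ∈ Kp q ∩ Ap (q ++ [false]) := ⟨hzK, prefix_sub_A hqb hzA⟩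
          rw [K_disj_false] at this; exact this
        · by_cases hcase : q ++ true :: s' = q ++ [true]
          · rw [hcase] at hzA ⊢
            exact K_inter_true q ⟨hzK, hzA⟩
          · exfalso
            have : z ∈ Kp q ∩ Ap (q ++ true :: s') := ⟨hzK, hzA⟩
            rw [K_disj_deep q hqb hcase] at this
            exact this
  · exfalso
    have : z ∈ Ap p ∩ Ap q := ⟨hzA, K_sub_A q hzK⟩
    rw [incomp_disjoint r hbc h1 h2] at this
    exact this

lemma ni_rep_false (p : List Bool) (t : ℕ) : ni (p ++ List.replicate t false) = ni p := by
  induction t with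
  | zero => simp
  | succ t ih =>
      rw [List.replicate_succ', ← List.append_assoc, ni_false, ih]

lemma nl_rep_false (p : List Bool) (t : ℕ) :
    nl (p ++ List.replicate t false) = nl p * (1/4)^t := by
  induction t with
  | zero => simp
  | succ t ih =>
      rw [List.replicate_succ', ← List.append_assoc, nl_false, ih, pow_succ]
      ring

/-- the exact dip depth identity -/
lemma dip_ratio (p : List Bool) :
    nl p / 16 = (1 - (1/2)^(ni p + 1)) * (nl p/16 + nG p) := by
  have hD := two_pow_sub_one_pos (ni p)
  have hD0 : (2:ℝ)^(ni p + 1) - 1 ≠ 0 := by linarith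
  have hT0 : (2:ℝ)^(ni p + 1) ≠ 0 := by positivity
  have hθ : ((1:ℝ)/2)^(ni p + 1) = 1/2^(ni p + 1) := by
    rw [div_pow, one_pow]
  rw [hθ, nG, gapOf]
  field_simp
  ring

lemma dip_defeat (p : List Bool) {x γ δ : ℝ} (hx : x ∈ Ap (p ++ [true]))
    (hδ : nl p/16 + nG p ≤ δ) (hγ : 1 - (1/2)^(ni p + 1) < γ) :
    x ∉ densSet Eset γ δ := by
  intro hdens
  have hl := nl_pos p
  have hG := gap_pos p
  have hrpos : 0 < nl p/16 + nG p := by linarith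
  have hvol := dip_vol p hx
  have hL : (volume (Ioo (x - (nl p/16 + nG p)) x ∩ Eset)).toReal ≤ nl p / 16 :=
    ENNReal.toReal_le_of_le_ofReal (by linarith) hvol.1
  have hR : (volume (Ioo x (x + (nl p/16 + nG p)) ∩ Eset)).toReal ≤ nl p / 16 :=
    ENNReal.toReal_le_of_le_ofReal (by linarith) hvol.2
  have hid := dip_ratio p
  have hmax := hdens (nl p/16 + nG p) ⟨hrpos, hδ⟩
  rw [ge_iff_le] at hmax
  have hLr : (volume (Ioo (x - (nl p/16 + nG p)) x ∩ Eset)).toReal / (nl p/16 + nG p)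
      ≤ 1 - (1/2)^(ni p + 1) := by
    rw [div_le_iff₀ hrpos]
    linarith
  have hRr : (volume (Ioo x (x + (nl p/16 + nG p)) ∩ Eset)).toReal / (nl p/16 + nG p)
      ≤ 1 - (1/2)^(ni p + 1) := by
    rw [div_le_iff₀ hrpos]
    linarith
  have : γ ≤ 1 - (1/2)^(ni p + 1) := le_trans hmax (max_le hLr hRr)
  linarith

lemma strictAnti_pos {δ : ℕ → ℝ} (hδ : StrictAnti δ) (h0 : Tendsto δ atTop (𝓝 0)) (m : ℕ) :
    0 < δ m := by
  by_contra hcon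
  push_neg at hcon
  have hlim : ∀ j, m + 1 ≤ j → δ j ≤ δ (m+1) := fun j hj => hδ.antitone hj
  have hle : (0:ℝ) ≤ δ (m+1) := le_of_tendsto h0 (eventually_atTop.2 ⟨m+1, hlim⟩)
  have : δ (m+1) < δ m := hδ (by omega)
  linarith

/-- the recursive defeating step -/
lemma sudt_step {γ' δ' : ℕ → ℝ} (hγ : Tendsto γ' atTop (𝓝 1)) (hδpos : ∀ m, 0 < δ' m)
    (p : List Bool) (m₀ : ℕ) :
    ∃ qm : List Bool × ℕ, m₀ < qm.2 ∧ (∃ s, s ≠ [] ∧ qm.1 = p ++ s) ∧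
      (∃ p', qm.1 = p' ++ [true] ∧ nl p'/16 + nG p' ≤ δ' qm.2 ∧
        1 - (1/2)^(ni p' + 1) < γ' qm.2) := by
  have hε : (0:ℝ) < (1/2)^(ni p + 1) := by positivity
  have hev : ∀ᶠ m in atTop, 1 - (1/2)^(ni p + 1) < γ' m := by
    have := hγ (Ioi_mem_nhds (show 1 - (1/2)^(ni p + 1) < 1 by linarith))
    exact this
  obtain ⟨M, hM⟩ := eventually_atTop.1 hev
  set m := max M (m₀ + 1) with hm
  have hγm : 1 - (1/2)^(ni p + 1) < γ' m := hM m (le_max_left _ _)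
  have hl := nl_pos p
  obtain ⟨t, ht⟩ := exists_pow_lt_of_lt_one
    (show (0:ℝ) < 8 * δ' m / nl p by
      have := hδpos m
      positivity) (show (1/4:ℝ) < 1 by norm_num)
  set p' := p ++ List.replicate t false with hp'
  refine ⟨⟨p' ++ [true], m⟩, by
    rw [hm]
    exact lt_of_lt_of_le (Nat.lt_succ_self m₀) (le_max_right _ _), ⟨List.replicate t false ++ [true],
    by simp, by rw [hp', List.append_assoc]⟩, p', rfl, ?_, ?_⟩
  · have h1 : nl p' = nl p * (1/4)^t := nl_rep_false p t
    have h2 : nG p' ≤ nl p' / 16 := gap_le p'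
    have h3 : nl p' < 8 * δ' m := by
      rw [h1]
      rw [lt_div_iff₀ hl] at ht
      calc nl p * (1/4)^t = (1/4)^t * nl p := by ring
      _ < 8 * δ' m := by linarith [ht]
    have hl' := nl_pos p'
    linarith
  · rw [hp', ni_rep_false]
    exact hγm

lemma udt_main : UDT Eset := by
  refine ⟨fun n => 1 - 8*(1/2)^n, fun n => (1/16)^n / 2, ?_, ?_, ?_, ?_, ?_⟩
  · intro a b hab
    have : ((1:ℝ)/2)^b < (1/2)^a := pow_lt_pow_right_of_lt_one₀ (by norm_num) (by norm_num) hab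
    simp only
    linarith
  · have h := tendsto_pow_atTop_nhds_zero_of_lt_one (show (0:ℝ) ≤ 1/2 by norm_num)
      (show (1/2:ℝ) < 1 by norm_num)
    have h2 : Tendsto (fun n : ℕ => (1:ℝ) - 8*(1/2:ℝ)^n) atTop (𝓝 (1 - 8*0)) :=
      (tendsto_const_nhds.sub (h.const_mul 8))
    simpa using h2
  · intro a b hab
    have : ((1:ℝ)/16)^b < (1/16)^a := pow_lt_pow_right_of_lt_one₀ (by norm_num) (by norm_num) hab
    simp only
    linarith
  · have h := tendsto_pow_atTop_nhds_zero_of_lt_one (show (0:ℝ) ≤ 1/16 by norm_num)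
      (show (1/16:ℝ) < 1 by norm_num)
    have h2 : Tendsto (fun n : ℕ => (1/16:ℝ)^n / 2) atTop (𝓝 (0 / 2)) := h.div_const 2
    simpa using h2
  · intro x hx
    rw [mem_iInter]
    intro k
    obtain ⟨n, hn, hdens⟩ := udt_point hx k
    rw [mem_iUnion]
    exact ⟨n, mem_iUnion.2 ⟨hn, hdens⟩⟩

lemma not_sudt : ¬ SUDT Eset := by
  rintro ⟨γ', δ', hγmono, hγlim, hδanti, hδlim, hsub⟩
  have hδpos : ∀ m, 0 < δ' m := strictAnti_pos hδanti hδlim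
  -- build the defeating point
  have hstep : ∀ pm : List Bool × ℕ, ∃ qm : List Bool × ℕ,
      pm.2 < qm.2 ∧ (∃ s, s ≠ [] ∧ qm.1 = pm.1 ++ s) ∧
      (∃ p', qm.1 = p' ++ [true] ∧ nl p'/16 + nG p' ≤ δ' qm.2 ∧
        1 - (1/2)^(ni p' + 1) < γ' qm.2) :=
    fun pm => sudt_step hγlim hδpos pm.1 pm.2
  choose f hf using hstep
  set seq : ℕ → List Bool × ℕ := fun n => f^[n] ([], 0) with hseqdef
  have hseq : ∀ n, seq (n+1) = f (seq n) := fun n => Function.iterate_succ_apply' f n _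
  -- the point x
  have hext : ∀ n j, n ≤ j → ∃ s, (seq j).1 = (seq n).1 ++ s := by
    intro n j hnj
    induction j with
    | zero =>
        have : n = 0 := by omega
        subst this; exact ⟨[], by simp⟩
    | succ j ih =>
        rcases Nat.lt_or_ge n (j+1) with hlt | hge
        · obtain ⟨s, hs⟩ := ih (by omega)
          obtain ⟨s', hs'ne, hs'⟩ := (hf (seq j)).2.1
          rw [hseq j] at *
          refine ⟨s ++ s', ?_⟩
          rw [hs', hs, List.append_assoc]
        · have : n = j + 1 := by omega
          subst this; exact ⟨[], by simp⟩
  have hbdd : BddAbove (range fun n => nv (seq n).1) := by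
    refine ⟨1, fun y hy => ?_⟩
    obtain ⟨n, rfl⟩ := hy
    have h1 := nvl_le_one (seq n).1
    have h2 := nl_pos (seq n).1
    linarith
  set x := ⨆ n, nv (seq n).1 with hx
  have hxA : ∀ n, x ∈ Ap (seq n).1 := by
    intro n
    constructor
    · rw [hx]; exact le_ciSup hbdd n
    · rw [hx]
      apply ciSup_le
      intro j
      rcases le_or_gt n j with h | h
      · obtain ⟨s, hs⟩ := hext n j h
        have : nv (seq j).1 ∈ Ap (seq n).1 := by
          rw [hs]
          exact append_sub_A _ _ (left_mem_Icc.2 (by have := nl_pos ((seq n).1 ++ s); linarith))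
        exact this.2
      · obtain ⟨s, hs⟩ := hext j n (by omega)
        have h1 : nv (seq j).1 ≤ nv (seq n).1 := by
          rw [hs]; exact v_mono_append _ _
        have h2 := nl_pos (seq n).1
        linarith
  -- x is in the interior of each island (beyond the first)
  have hxCR : ∀ n, x ∈ CR (seq n).1 := by
    intro n
    obtain ⟨s, hsne, hs⟩ := (hf (seq n)).2.1
    have h1 : x ∈ Ap (seq (n+1)).1 := hxA (n+1)
    rw [hseq n, hs] at h1
    exact strict_sub_CR ⟨s, rfl⟩ (by
      intro hcon
      exact hsne (List.append_cancel_left (hcon.trans (List.append_nil _).symm))) h1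
  have hlen : ∀ n, n ≤ ((seq n).1).length := by
    intro n
    induction n with
    | zero => omega
    | succ n ih =>
        obtain ⟨s, hsne, hs⟩ := (hf (seq n)).2.1
        rw [hseq n, hs]
        simp only [List.length_append]
        have : 1 ≤ s.length := by
          rcases s with - | ⟨a, s⟩
          · simp at hsne
          · simp
        omega
  have hxE : x ∈ Eset := by
    constructor
    · have h := A_sub_base (seq 0).1 (hxA 0)
      exact ⟨by linarith [h.1], h.2⟩
    · intro hbad
      rw [Ebad, mem_iUnion] at hbad
      obtain ⟨q, hq⟩ := hbad
      -- pick n with length > q.length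
      set n := q.length + 1 with hn
      have hnp : ¬ ((seq n).1 <+: q) := by
        intro hcon
        have := hcon.length_le
        have := hlen n
        omega
      have hmem := K_anc hnp ⟨hq, hxA n⟩
      have hCR := hxCR n
      have hl := nl_pos (seq n).1
      have hG := gap_pos (seq n).1
      rcases hmem with h' | h'
      · rw [h'] at hCR
        have := hCR.1
        linarith
      · simp only [mem_singleton_iff] at h'
        rw [h'] at hCR
        have := hCR.2
        linarith
  -- x defeats every tail
  have hdefeat : ∀ n, ∃ m, n ≤ m ∧ x ∉ densSet Eset (γ' m) (δ' m) := by
    intro n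
    have hm2 : ∀ j, j ≤ (seq j).2 := by
      intro j
      induction j with
      | zero => omega
      | succ j ih =>
          have := (hf (seq j)).1
          rw [hseq j]
          omega
    refine ⟨(seq (n+1)).2, by have := hm2 (n+1); omega, ?_⟩
    obtain ⟨p', hp', hδ', hγ'⟩ := (hf (seq n)).2.2
    rw [hseq n]
    apply dip_defeat p' _ hδ' hγ'
    rw [← hp']
    have h := hxA (n+1)
    rw [hseq n] at h
    exact h
  -- derive contradiction with SUDT inclusion
  have hx2 := hsub hxE
  rw [mem_iUnion] at hx2
  obtain ⟨k, hk⟩ := hx2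
  rw [mem_iInter] at hk
  obtain ⟨m, hm, hnot⟩ := hdefeat k
  have := hk m
  rw [mem_iInter] at this
  exact hnot (this hm)


/-- There exists a Lebesgue measurable set which has uniform density type but not
strong uniform density type. -/
theorem exists_UDT_not_SUDT :
    ∃ E : Set ℝ, MeasurableSet E ∧ UDT E ∧ ¬ SUDT E := by
  exact ⟨Eset, Eset_meas, udt_main, not_sudt⟩

end UDTConstruction
end

section
/- For every Lebesgue measurable set E ⊆ ℝ there exists a measurable subset E* ⊆ E such that |E \ E*| = 0 and E* has strong uniform density type (SUDT). That is, every measurable set equals an SUDT set modulo a set of Lebesgue measure zero. -/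
open MeasureTheory Set Filter Topology
open scoped ENNReal

section aux

lemma vol_aux1 (E : Set ℝ) (r x y : ℝ) (hxy : x ≤ y) :
    volume (Ioo (y - r) y ∩ E) ≤ volume (Ioo (x - r) x ∩ E) + ENNReal.ofReal (y - x) := by
  calc volume (Ioo (y - r) y ∩ E) ≤ volume ((Ioo (x - r) x ∩ E) ∪ Ico x y) := by
        apply measure_mono
        rintro z ⟨⟨h1, h2⟩, hz⟩
        rcases lt_or_ge z x with h | h
        · exact Or.inl ⟨⟨by linarith, h⟩, hz⟩
        · exact Or.inr ⟨h, h2⟩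
    _ ≤ _ := by
        refine (measure_union_le _ _).trans ?_
        rw [Real.volume_Ico]

lemma vol_aux2 (E : Set ℝ) (r x y : ℝ) (hxy : x ≤ y) :
    volume (Ioo (x - r) x ∩ E) ≤ volume (Ioo (y - r) y ∩ E) + ENNReal.ofReal (y - x) := by
  calc volume (Ioo (x - r) x ∩ E) ≤ volume ((Ioo (y - r) y ∩ E) ∪ Ioc (x - r) (y - r)) := by
        apply measure_mono
        rintro z ⟨⟨h1, h2⟩, hz⟩
        rcases lt_or_ge (y - r) z with h | h
        · exact Or.inl ⟨⟨h, by linarith⟩, hz⟩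
        · exact Or.inr ⟨h1, h⟩
    _ ≤ _ := by
        refine (measure_union_le _ _).trans ?_
        rw [Real.volume_Ioc]
        norm_num

lemma vol_fin (E : Set ℝ) (r x : ℝ) : volume (Ioo (x - r) x ∩ E) ≠ ⊤ := by
  refine ne_top_of_le_ne_top ?_ (measure_mono inter_subset_left)
  rw [Real.volume_Ioo]
  exact ENNReal.ofReal_ne_top

lemma vol_fin' (E : Set ℝ) (a b : ℝ) : volume (Ioo a b ∩ E) ≠ ⊤ := by
  have := vol_fin E (b - a) b
  simpa using this

lemma lip_f (E : Set ℝ) (r : ℝ) :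
    LipschitzWith 1 (fun x => (volume (Ioo (x - r) x ∩ E)).toReal) := by
  apply LipschitzWith.of_dist_le_mul
  intro x y
  wlog h : y ≤ x generalizing x y
  · rw [dist_comm, dist_comm x y]; exact this y x (le_of_not_ge h)
  rw [Real.dist_eq, Real.dist_eq, NNReal.coe_one, one_mul,
    abs_of_nonneg (by linarith : (0:ℝ) ≤ x - y)]
  have key : ∀ a b : ℝ, b ≤ a →
      (volume (Ioo (a - r) a ∩ E)).toReal - (volume (Ioo (b - r) b ∩ E)).toReal ≤ a - b := by
    intro a b hba
    have h1 := vol_aux1 E r b a hba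
    have h2 := ENNReal.toReal_mono (by
      exact ENNReal.add_ne_top.2 ⟨vol_fin E r b, ENNReal.ofReal_ne_top⟩) h1
    rw [ENNReal.toReal_add (vol_fin E r b) ENNReal.ofReal_ne_top,
      ENNReal.toReal_ofReal (by linarith)] at h2
    linarith
  have k1 := key x y h
  have k2' := vol_aux2 E r y x h
  have k2 := ENNReal.toReal_mono (by
      exact ENNReal.add_ne_top.2 ⟨vol_fin E r x, ENNReal.ofReal_ne_top⟩) k2'
  rw [ENNReal.toReal_add (vol_fin E r x) ENNReal.ofReal_ne_top,
    ENNReal.toReal_ofReal (by linarith)] at k2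
  rw [abs_le]
  constructor <;> linarith

lemma isClosed_densSet (E : Set ℝ) (γ δ : ℝ) : IsClosed (densSet E γ δ) := by
  have : densSet E γ δ = ⋂ (r : ℝ), ⋂ (_ : r ∈ Ioc (0:ℝ) δ),
      {x : ℝ | γ ≤ max ((volume (Ioo (x - r) x ∩ E)).toReal / r)
        ((volume (Ioo x (x + r) ∩ E)).toReal / r)} := by
    ext x; simp [densSet, mem_iInter, ge_iff_le]
  rw [this]
  refine isClosed_iInter fun r => isClosed_iInter fun _ => ?_
  have hf : Continuous fun x : ℝ => (volume (Ioo (x - r) x ∩ E)).toReal :=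
    (lip_f E r).continuous
  have hg : Continuous fun x : ℝ => (volume (Ioo x (x + r) ∩ E)).toReal := by
    have : (fun x : ℝ => (volume (Ioo x (x + r) ∩ E)).toReal)
        = (fun x : ℝ => (volume (Ioo (x - r) x ∩ E)).toReal) ∘ (fun x => x + r) := by
      funext x; simp
    rw [this]
    exact hf.comp (continuous_id.add continuous_const)
  exact isClosed_le continuous_const (((hf.div_const r).max (hg.div_const r)))

lemma densSet_anti (E : Set ℝ) (γ : ℝ) {δ δ' : ℝ} (h : δ' ≤ δ) :
    densSet E γ δ ⊆ densSet E γ δ' :=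
  fun _ hx r hr => hx r ⟨hr.1, hr.2.trans h⟩

lemma vol_inter_congr {E E' : Set ℝ} (hsub : E' ⊆ E) (h0 : volume (E \ E') = 0)
    (s : Set ℝ) : volume (s ∩ E) = volume (s ∩ E') := by
  refine le_antisymm ?_ (measure_mono (inter_subset_inter_right _ hsub))
  calc volume (s ∩ E) ≤ volume ((s ∩ E') ∪ (E \ E')) := by
        apply measure_mono
        rintro z ⟨hz, hzE⟩
        by_cases h : z ∈ E'
        · exact Or.inl ⟨hz, h⟩
        · exact Or.inr ⟨hzE, h⟩
    _ ≤ volume (s ∩ E') + volume (E \ E') := measure_union_le _ _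
    _ = volume (s ∩ E') := by rw [h0, add_zero]

lemma densSet_congr {E E' : Set ℝ} (hsub : E' ⊆ E) (h0 : volume (E \ E') = 0)
    (γ δ : ℝ) : densSet E γ δ = densSet E' γ δ := by
  have h : ∀ a b : ℝ, volume (Ioo a b ∩ E) = volume (Ioo a b ∩ E') :=
    fun a b => vol_inter_congr hsub h0 _
  unfold densSet
  simp only [h]

lemma exists_mem_densSet {E : Set ℝ} {x γ : ℝ} (hγ : γ < 1)
    (hx : Tendsto (fun r => volume (E ∩ Metric.closedBall x r) / volume (Metric.closedBall x r))
      (𝓝[>] (0:ℝ)) (𝓝 1)) :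
    ∃ δ > 0, x ∈ densSet E γ δ := by
  rcases le_or_gt γ 0 with hγ0 | hγ0
  · refine ⟨1, one_pos, fun r hr => ?_⟩
    have : (0:ℝ) ≤ (volume (Ioo (x - r) x ∩ E)).toReal / r := by
      have := hr.1; positivity
    exact le_trans hγ0 (le_max_of_le_left this)
  · have hlt : ENNReal.ofReal γ < 1 := ENNReal.ofReal_lt_one.2 hγ
    have hev : ∀ᶠ r in 𝓝[>] (0:ℝ),
        ENNReal.ofReal γ < volume (E ∩ Metric.closedBall x r) / volume (Metric.closedBall x r) :=
      hx.eventually (eventually_gt_nhds hlt)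
    rw [eventually_nhdsWithin_iff, Metric.eventually_nhds_iff] at hev
    obtain ⟨ε, hε, hball⟩ := hev
    refine ⟨ε / 2, by linarith, fun r hr => ?_⟩
    obtain ⟨hr0, hrε⟩ := hr
    have hrmem : ENNReal.ofReal γ <
        volume (E ∩ Metric.closedBall x r) / volume (Metric.closedBall x r) := by
      apply hball (y := r)
      · rw [Real.dist_eq, sub_zero, abs_of_pos hr0]; linarith
      · exact hr0
    have hcb : volume (Metric.closedBall x r) = ENNReal.ofReal (2 * r) :=
      Real.volume_closedBall x r
    have hne0 : volume (Metric.closedBall x r) ≠ 0 := by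
      rw [hcb]; simp only [ne_eq, ENNReal.ofReal_eq_zero, not_le]; linarith
    have hnetop : volume (Metric.closedBall x r) ≠ ⊤ := by rw [hcb]; exact ENNReal.ofReal_ne_top
    rw [ENNReal.lt_div_iff_mul_lt (Or.inl hne0) (Or.inl hnetop)] at hrmem
    have hsplit : volume (E ∩ Metric.closedBall x r)
        ≤ volume (Ioo (x - r) x ∩ E) + volume (Ioo x (x + r) ∩ E) := by
      have hsub : E ∩ Metric.closedBall x r ⊆
          (Ioo (x - r) x ∩ E) ∪ (Ioo x (x + r) ∩ E) ∪ {x - r, x, x + r} := by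
        rintro z ⟨hzE, hzB⟩
        rw [Real.closedBall_eq_Icc] at hzB
        obtain ⟨h1, h2⟩ := hzB
        rcases eq_or_lt_of_le h1 with h | h
        · exact Or.inr (Or.inl h.symm)
        rcases lt_trichotomy z x with h' | h' | h'
        · exact Or.inl (Or.inl ⟨⟨h, h'⟩, hzE⟩)
        · exact Or.inr (Or.inr (Or.inl h'))
        rcases eq_or_lt_of_le h2 with h'' | h''
        · exact Or.inr (Or.inr (Or.inr h''))
        · exact Or.inl (Or.inr ⟨⟨h', h''⟩, hzE⟩)
      calc volume (E ∩ Metric.closedBall x r) ≤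
          volume ((Ioo (x - r) x ∩ E) ∪ (Ioo x (x + r) ∩ E)) + volume ({x - r, x, x + r} : Set ℝ) :=
            le_trans (measure_mono hsub) (measure_union_le _ _)
        _ = volume ((Ioo (x - r) x ∩ E) ∪ (Ioo x (x + r) ∩ E)) := by
            rw [(Set.toFinite ({x - r, x, x + r} : Set ℝ)).measure_zero volume, add_zero]
        _ ≤ _ := measure_union_le _ _
    set a := (volume (Ioo (x - r) x ∩ E)).toReal with ha
    set b := (volume (Ioo x (x + r) ∩ E)).toReal with hb
    have hsum : γ * (2 * r) ≤ a + b := by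
      have h1 : ENNReal.ofReal (γ * (2 * r)) <
          volume (Ioo (x - r) x ∩ E) + volume (Ioo x (x + r) ∩ E) := by
        rw [ENNReal.ofReal_mul hγ0.le]
        exact lt_of_lt_of_le (by rwa [hcb] at hrmem) hsplit
      have h2 := ENNReal.toReal_mono
        (ENNReal.add_ne_top.2 ⟨vol_fin E r x, vol_fin' E x (x + r)⟩) h1.le
      rw [ENNReal.toReal_ofReal (by positivity),
        ENNReal.toReal_add (vol_fin E r x) (vol_fin' E x (x + r))] at h2
      exact h2
    have ha0 : 0 ≤ a := ENNReal.toReal_nonneg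
    have hb0 : 0 ≤ b := ENNReal.toReal_nonneg
    rw [ge_iff_le, le_max_iff]
    rcases le_total a b with hab | hab
    · right; rw [le_div_iff₀ hr0]; linarith
    · left; rw [le_div_iff₀ hr0]; linarith

lemma exists_delta (E D : Set ℝ) (hD : MeasurableSet D)
    (hDT : ∀ x ∈ D, Tendsto
      (fun r => volume (E ∩ Metric.closedBall x r) / volume (Metric.closedBall x r))
      (𝓝[>] (0:ℝ)) (𝓝 1))
    {γ : ℝ} (hγ : γ < 1) (n : ℕ) :
    ∃ d > 0, volume ((D ∩ Ioo (-(n:ℝ)) n) \ densSet E γ d) ≤ (1/2 : ℝ≥0∞) ^ n := by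
  set A : ℕ → Set ℝ := fun j => (D ∩ Ioo (-(n:ℝ)) n) \ densSet E γ (1/(j+1)) with hA
  have hmeas : ∀ j, NullMeasurableSet (A j) volume := fun j =>
    (((hD.inter measurableSet_Ioo).diff
      (isClosed_densSet E γ (1/(j+1))).measurableSet)).nullMeasurableSet
  have hanti : Antitone A := by
    intro j j' hjj'
    apply diff_subset_diff_right
    apply densSet_anti
    have : (0:ℝ) < j + 1 := by positivity
    gcongr
  have hfin : ∃ j, volume (A j) ≠ ⊤ := by
    refine ⟨0, ne_top_of_le_ne_top ?_ (measure_mono (diff_subset.trans inter_subset_right))⟩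
    rw [Real.volume_Ioo]; exact ENNReal.ofReal_ne_top
  have hempty : ⋂ j, A j = ∅ := by
    rw [eq_empty_iff_forall_notMem]
    intro x hx
    rw [mem_iInter] at hx
    have hxD : x ∈ D := (hx 0).1.1
    obtain ⟨δ, hδ0, hδ⟩ := exists_mem_densSet hγ (hDT x hxD)
    obtain ⟨j, hj⟩ := exists_nat_one_div_lt hδ0
    exact (hx j).2 (densSet_anti E γ (le_of_lt (by exact_mod_cast hj)) hδ)
  have htends := tendsto_measure_iInter_atTop hmeas hanti hfin
  rw [hempty, measure_empty] at htends
  have hpos : (0:ℝ≥0∞) < (1/2 : ℝ≥0∞) ^ n :=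
    ENNReal.pow_pos (ENNReal.div_pos one_ne_zero ENNReal.ofNat_ne_top) n
  obtain ⟨j, hj⟩ := (htends.eventually (eventually_lt_nhds hpos)).exists
  exact ⟨1/(j+1), by positivity, hj.le⟩

end aux

/-- Every Lebesgue measurable set equals an SUDT set modulo a set of measure zero. -/
theorem measurable_eq_SUDT_ae (E : Set ℝ) (hE : MeasurableSet E) :
    ∃ Estar : Set ℝ, Estar ⊆ E ∧ MeasurableSet Estar ∧
      volume (E \ Estar) = 0 ∧ SUDT Estar := by
  -- density points
  set T : Set ℝ := {x : ℝ | Tendsto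
      (fun r => volume (E ∩ Metric.closedBall x r) / volume (Metric.closedBall x r))
      (𝓝[>] (0:ℝ)) (𝓝 1)} with hT
  have hET : volume (E \ T) = 0 := by
    have hae := Besicovitch.ae_tendsto_measure_inter_div_of_measurableSet volume hE
    rw [ae_iff] at hae
    refine measure_mono_null ?_ hae
    intro x ⟨hxE, hxT⟩
    simp only [mem_setOf_eq]
    intro hx
    rw [indicator_of_mem hxE, Pi.one_apply] at hx
    exact hxT hx
  set N := toMeasurable volume (E \ T) with hN
  set D := E \ N with hD
  have hDmeas : MeasurableSet D := hE.diff (measurableSet_toMeasurable _ _)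
  have hDE : D ⊆ E := diff_subset
  have hDT : ∀ x ∈ D, Tendsto
      (fun r => volume (E ∩ Metric.closedBall x r) / volume (Metric.closedBall x r))
      (𝓝[>] (0:ℝ)) (𝓝 1) := by
    intro x hx
    by_contra hcon
    exact hx.2 (subset_toMeasurable volume (E \ T) ⟨hx.1, hcon⟩)
  have hED : volume (E \ D) = 0 := by
    have hsub : E \ D ⊆ N := fun x hx => by_contra fun h => hx.2 ⟨hx.1, h⟩
    refine measure_mono_null hsub ?_
    rw [hN, measure_toMeasurable]; exact hET
  -- sequences
  set γ : ℕ → ℝ := fun n => 1 - (1/2:ℝ)^n with hγdef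
  have hγlt : ∀ n, γ n < 1 := fun n => by
    have : (0:ℝ) < (1/2:ℝ)^n := by positivity
    simp only [hγdef]; linarith
  have hγmono : StrictMono γ := by
    intro a b hab
    have : (1/2:ℝ)^b < (1/2:ℝ)^a :=
      pow_lt_pow_right_of_lt_one₀ (by norm_num) (by norm_num) hab
    simp only [hγdef]; linarith
  have hγtend : Tendsto γ atTop (𝓝 1) := by
    have h1 : Tendsto (fun _ : ℕ => (1:ℝ)) atTop (𝓝 1) := tendsto_const_nhds
    have h2 := h1.sub
      (tendsto_pow_atTop_nhds_zero_of_lt_one (by norm_num : (0:ℝ) ≤ 1/2) (by norm_num))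
    rw [hγdef]; simpa using h2
  -- choose δ' n
  have hchoice : ∀ n : ℕ, ∃ d > 0,
      volume ((D ∩ Ioo (-(n:ℝ)) n) \ densSet E (γ n) d) ≤ (1/2 : ℝ≥0∞) ^ n :=
    fun n => exists_delta E D hDmeas hDT (hγlt n) n
  choose δ' hδ'pos hδ' using hchoice
  set I : ℕ → ℝ := fun n => (Finset.range (n+1)).inf' Finset.nonempty_range_add_one δ' with hI
  have hIpos : ∀ n, 0 < I n := fun n =>
    (Finset.lt_inf'_iff _).2 fun m _ => hδ'pos m
  have hIle : ∀ n, I n ≤ δ' n := fun n =>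
    Finset.inf'_le _ (Finset.self_mem_range_succ n)
  have hIanti : ∀ n, I (n+1) ≤ I n := by
    intro n
    refine Finset.le_inf' _ _ fun m hm => Finset.inf'_le _ ?_
    exact Finset.mem_range_succ_iff.2 ((Finset.mem_range_succ_iff.1 hm).trans (Nat.le_succ n))
  set δ : ℕ → ℝ := fun n => I n * (1/2:ℝ)^n with hδdef
  have hδpos : ∀ n, 0 < δ n := fun n => mul_pos (hIpos n) (by positivity)
  have hδanti : StrictAnti δ := by
    apply strictAnti_nat_of_succ_lt
    intro n
    calc δ (n+1) = I (n+1) * (1/2:ℝ)^(n+1) := rfl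
      _ ≤ I n * (1/2:ℝ)^(n+1) := by
          apply mul_le_mul_of_nonneg_right (hIanti n) (by positivity)
      _ < I n * (1/2:ℝ)^n := by
          apply mul_lt_mul_of_pos_left _ (hIpos n)
          exact pow_lt_pow_right_of_lt_one₀ (by norm_num) (by norm_num) (Nat.lt_succ_self n)
  have hδtend : Tendsto δ atTop (𝓝 0) := by
    apply squeeze_zero (fun n => (hδpos n).le) (g := fun n => δ' 0 * (1/2:ℝ)^n)
    · intro n
      apply mul_le_mul_of_nonneg_right _ (by positivity)
      exact Finset.inf'_le _ (Finset.mem_range.2 (Nat.succ_pos n))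
    · have := (tendsto_pow_atTop_nhds_zero_of_lt_one
        (by norm_num : (0:ℝ) ≤ 1/2) (by norm_num)).const_mul (δ' 0)
      simpa using this
  have hδle : ∀ n, δ n ≤ δ' n := by
    intro n
    calc δ n = I n * (1/2:ℝ)^n := rfl
      _ ≤ δ' n * 1 := by
          apply mul_le_mul (hIle n) (pow_le_one₀ (by norm_num) (by norm_num))
            (by positivity) (hδ'pos n).le
      _ = δ' n := mul_one _
  -- the sets C n and the measure bound
  set C : ℕ → Set ℝ := fun n => densSet E (γ n) (δ n) with hC
  have hCbound : ∀ n : ℕ, volume ((D ∩ Ioo (-(n:ℝ)) n) \ C n) ≤ (1/2 : ℝ≥0∞) ^ n := by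
    intro n
    refine le_trans (measure_mono (diff_subset_diff_right ?_)) (hδ' n)
    exact densSet_anti E (γ n) (hδle n)
  set S : Set ℝ := ⋃ k : ℕ, ⋂ n, ⋂ (_ : n ≥ k), C n with hS
  set Estar := D ∩ S with hEstar
  have hEstarE : Estar ⊆ E := inter_subset_left.trans hDE
  have hEstarMeas : MeasurableSet Estar := by
    apply hDmeas.inter
    exact MeasurableSet.iUnion fun k => MeasurableSet.iInter fun n =>
      MeasurableSet.iInter fun _ => (isClosed_densSet E (γ n) (δ n)).measurableSet
  -- volume (D \ S) = 0
  have hDS : volume (D \ S) = 0 := by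
    have hcover : D \ S ⊆ ⋃ m : ℕ, ((D \ S) ∩ Ioo (-(m:ℝ)) m) := by
      intro x hx
      obtain ⟨m, hm⟩ := exists_nat_gt |x|
      rcases abs_lt.1 hm with ⟨h1, h2⟩
      exact mem_iUnion.2 ⟨m, hx, h1, h2⟩
    refine measure_mono_null hcover (measure_iUnion_null fun m => ?_)
    set X := (D \ S) ∩ Ioo (-(m:ℝ)) m with hX
    set B : ℝ≥0∞ := ∑' i : ℕ, (1/2 : ℝ≥0∞) ^ i with hB
    have hBne : B ≠ ⊤ := by
      rw [hB, ENNReal.tsum_geometric, ne_eq, ENNReal.inv_eq_top, tsub_eq_zero_iff_le]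
      exact fun h => absurd (h.trans_lt (ENNReal.half_lt_self one_ne_zero ENNReal.one_ne_top)) (lt_irrefl _)
    have hkey : ∀ k : ℕ, volume X ≤ (1/2 : ℝ≥0∞) ^ (k + m) * B := by
      intro k
      have hsub : X ⊆ ⋃ i : ℕ, ((D ∩ Ioo (-(m:ℝ)) m) \ C (i + (k + m))) := by
        rintro x ⟨⟨hxD, hxS⟩, hxI⟩
        have : ¬ ∃ k' : ℕ, ∀ n ≥ k', x ∈ C n := by
          intro ⟨k', hk'⟩
          exact hxS (mem_iUnion.2 ⟨k', by simpa [mem_iInter] using hk'⟩)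
        push_neg at this
        obtain ⟨n, hnk, hxn⟩ := this (k + m)
        refine mem_iUnion.2 ⟨n - (k + m), ⟨⟨hxD, hxI⟩, ?_⟩⟩
        rwa [Nat.sub_add_cancel hnk]
      calc volume X ≤ ∑' i : ℕ, volume ((D ∩ Ioo (-(m:ℝ)) m) \ C (i + (k + m))) :=
            (measure_mono hsub).trans (measure_iUnion_le _)
        _ ≤ ∑' i : ℕ, (1/2 : ℝ≥0∞) ^ (i + (k + m)) := by
            refine ENNReal.tsum_le_tsum fun i => ?_
            refine le_trans (measure_mono ?_) (hCbound (i + (k + m)))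
            apply diff_subset_diff_left
            apply inter_subset_inter_right
            apply Ioo_subset_Ioo
            · simp only [neg_le_neg_iff, Nat.cast_le]; omega
            · exact_mod_cast by omega
        _ = (1/2 : ℝ≥0∞) ^ (k + m) * B := by
            rw [hB, ← ENNReal.tsum_mul_left]
            congr 1; funext i
            rw [pow_add, mul_comm]
    have hlim : Tendsto (fun k : ℕ => (1/2 : ℝ≥0∞) ^ (k + m) * B) atTop (𝓝 0) := by
      have h1 : Tendsto (fun k : ℕ => (1/2 : ℝ≥0∞) ^ (k + m)) atTop (𝓝 0) :=
        (ENNReal.tendsto_pow_atTop_nhds_zero_of_lt_one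
          (ENNReal.half_lt_self one_ne_zero ENNReal.one_ne_top)).comp
          (tendsto_add_atTop_nat m)
      have h2 := ENNReal.Tendsto.mul_const h1 (Or.inr hBne)
      simpa using h2
    exact le_zero_iff.1 (ge_of_tendsto' hlim hkey)
  have hnull : volume (E \ Estar) = 0 := by
    refine measure_mono_null (t := (E \ D) ∪ (D \ S)) (fun x hx => ?_)
      (measure_union_null hED hDS)
    by_cases h : x ∈ D
    · exact Or.inr ⟨h, fun hS' => hx.2 ⟨h, hS'⟩⟩
    · exact Or.inl ⟨hx.1, h⟩
  refine ⟨Estar, hEstarE, hEstarMeas, hnull, γ, δ, hγmono, hγtend, hδanti, hδtend, ?_⟩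
  have hcongr : ∀ n : ℕ, densSet Estar (γ n) (δ n) = C n := fun n =>
    (densSet_congr hEstarE hnull (γ n) (δ n)).symm
  intro x hx
  have hxS := hx.2
  simp only [hS, mem_iUnion, mem_iInter] at hxS ⊢
  obtain ⟨k, hk⟩ := hxS
  exact ⟨k, fun n hn => (hcongr n) ▸ hk n hn⟩
end
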